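/- arXiv:2411.08841 — 5 statements merged into one kernel-verified Lean document; each statement's English description precedes it below -/
import Mathlib

section
/- Let a ≥ b be integers and let ς : [-∞,∞] → [0,1] be an order-preserving homeomorphism. Then the map δ_{ab} × s_{ab} : K(a;b) → J(a,b) × [b,a] is a homeomorphism, where K(a;b) carries the subspace topology of the ambient product, J(a,b) the product topology, and [b,a] ⊆ ℝ the standard topology. -/
open scoped ENNReal

noncomputable section

namespace JKFlow

/-- `J(m,n) := ∏_{j ∈ ℤ, n < j < m} [0,∞]`, with the product topology. -/
abbrev Jspace (m n : ℤ) : Type :=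
  {j : ℤ // n < j ∧ j < m} → ℝ≥0∞

/-- The boundary `∂J(m,n)`: points with at least one coordinate equal to `∞`. -/
def JBoundary (m n : ℤ) : Set (Jspace m n) :=
  {z | ∃ j, z j = ∞}

/-- The ambient product containing `K(a;b)`. -/
abbrev KAmb (a b : ℤ) : Type :=
  ({j : ℤ // b ≤ j ∧ j < a} → ℝ≥0∞) × ({j : ℤ // b < j ∧ j ≤ a} → ℝ≥0∞)

/-- `K(a;b)` as a subset of the ambient product: the pairs `(x,y)` such that for some
integer `r` with `b ≤ r ≤ a` one has `x_j = 0` for `j < r` and `y_j = 0` for `j > r`. -/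
def KSet (a b : ℤ) : Set (KAmb a b) :=
  {k | ∃ r : ℤ, b ≤ r ∧ r ≤ a ∧
    (∀ j : {j : ℤ // b ≤ j ∧ j < a}, (j : ℤ) < r → k.1 j = 0) ∧
    (∀ j : {j : ℤ // b < j ∧ j ≤ a}, r < (j : ℤ) → k.2 j = 0)}

/-- The boundary `∂K(a;b)`: points with at least one coordinate equal to `∞`. -/
def KBoundary (a b : ℤ) : Set (KAmb a b) :=
  {k | (∃ j, k.1 j = ∞) ∨ (∃ j, k.2 j = ∞)}

/-- The map `δ_{ab} : K(a;b) → J(a,b)`, `δ(x,y)_j = x_j + y_j` for `b < j < a`. -/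
def deltaMap (a b : ℤ) (k : KAmb a b) : Jspace a b :=
  fun j => k.1 ⟨j.1, j.2.1.le, j.2.2⟩ + k.2 ⟨j.1, j.2.1, j.2.2.le⟩

/-- The first coordinate family of a point of `K(a;b)`, extended by `0` to all of `ℤ`. -/
def Xext (a b : ℤ) (k : KAmb a b) (j : ℤ) : ℝ≥0∞ :=
  if h : b ≤ j ∧ j < a then k.1 ⟨j, h⟩ else 0

/-- The second coordinate family of a point of `K(a;b)`, extended by `0` to all of `ℤ`. -/
def Yext (a b : ℤ) (k : KAmb a b) (j : ℤ) : ℝ≥0∞ :=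
  if h : b < j ∧ j ≤ a then k.2 ⟨j, h⟩ else 0

/-- The composition of `ς : [-∞,∞] ≃ₜ [0,1]` with the inclusion `[0,1] ⊆ ℝ`. -/
def sigmaR (ς : EReal ≃ₜ Set.Icc (0 : ℝ) 1) : EReal → ℝ :=
  fun z => (ς z : ℝ)

/-- The map `s_{ab} : K(a;b) → ℝ` (defined on the ambient product), relative to a
function `σ : [-∞,∞] → ℝ`:
`s(x,y) = a − Σ_{i=b}^{a−1} σ((Σ_{b≤l≤i} x_l) − (Σ_{i<l≤a} y_l))`. -/
def sMap (a b : ℤ) (σ : EReal → ℝ) (k : KAmb a b) : ℝ :=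
  (a : ℝ) - ∑ i ∈ Finset.Ico b a,
    σ ((↑(∑ l ∈ Finset.Icc b i, Xext a b k l) : EReal)
        - (↑(∑ l ∈ Finset.Ioc i a, Yext a b k l) : EReal))

/-- The composition map `i_{mpn} : J(m,p) × J(p,n) → J(m,n)`: the coordinates are those
of `u` for `p < j < m`, equal to `∞` at `j = p`, and those of `v` for `n < j < p`. -/
def iComp (m p n : ℤ) (u : Jspace m p) (v : Jspace p n) : Jspace m n :=
  fun j =>
    if h : p < (j : ℤ) then u ⟨j.1, h, j.2.2⟩
    else if h' : (j : ℤ) < p then v ⟨j.1, j.2.1, h'⟩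
    else ∞

/-- The left composition map `κ^L : J(a,a') × K(a';b) → K(a;b)`. -/
def kappaL (a a' b : ℤ) (z : Jspace a a') (k : KAmb a' b) : KAmb a b :=
  (fun j =>
      if h : a' < (j : ℤ) then z ⟨j.1, h, j.2.2⟩
      else if h' : (j : ℤ) < a' then k.1 ⟨j.1, j.2.1, h'⟩
      else ∞,
    fun j => if h : (j : ℤ) ≤ a' then k.2 ⟨j.1, j.2.1, h⟩ else 0)

/-- The right composition map `κ^R : K(a;b') × J(b',b) → K(a;b)`. -/
def kappaR (a b' b : ℤ) (k : KAmb a b') (w : Jspace b' b) : KAmb a b :=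
  (fun j => if h : b' ≤ (j : ℤ) then k.1 ⟨j.1, h, j.2.2⟩ else 0,
    fun j =>
      if h : b' < (j : ℤ) then k.2 ⟨j.1, h, j.2.2⟩
      else if h' : (j : ℤ) < b' then w ⟨j.1, j.2.1, h'⟩
      else ∞)

end JKFlow

open JKFlow

/-!
`K(a;b)` is a closed subset of a product of copies of `[0,∞]`, hence compact, so it suffices to
show that `δ × s` is a continuous bijection onto the Hausdorff space `J(a,b) × [b,a]`. Write
`h_i = Σ_{l ≤ i} x_l − Σ_{l > i} y_l ∈ [-∞,∞]` (`height`), so that `s = a − Σ_i ς(h_i)`; on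
`K(a;b)` one of the two sums vanishes, which makes every `h_i`, hence `s`, continuous.

Over a fixed `z = δ(x,y)` consecutive heights differ by `z_i`, so a strict inequality
`h_j < h'_j` at one index propagates to `h_i ≤ h'_i` at every index. As `ς` is strictly
monotone, equal values of `s` force equal heights, and the heights together with `z` determine
the point.

The fibre over `z` is a chain of connected pieces, one for each position `r` of the cut, in which
`(x_r, y_r)` ranges over `x_r + y_r = z_r`. It runs from `x_b = ∞`, where `s = b`, to `y_a = ∞`,
where `s = a`, so `s` takes every value of `[b,a]` on it.
-/

namespace JKFlow

lemma coe_sub_coe_lt_of_add_lt {A B A' B' : ℝ≥0∞} (hAB : A = 0 ∨ B = 0)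
    (hAB' : A' = 0 ∨ B' = 0) (h : A + B' < A' + B) : (A : EReal) - B < (A' : EReal) - B' := by
  rcases hAB with rfl | rfl <;> rcases hAB' with rfl | rfl <;> simp_all
  rcases h with h | h
  · exact (EReal.neg_le_zero.mpr (EReal.coe_ennreal_nonneg B)).trans_lt
      (EReal.coe_ennreal_pos.mpr h)
  · exact (EReal.neg_lt_zero.mpr (EReal.coe_ennreal_pos.mpr h)).trans_le
      (EReal.coe_ennreal_nonneg A')

lemma eq_and_eq_of_add_eq {A B A' B' : ℝ≥0∞} (hAB : A = 0 ∨ B = 0)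
    (hAB' : A' = 0 ∨ B' = 0) (h : A + B' = A' + B) : A = A' ∧ B = B' := by
  rcases hAB with rfl | rfl <;> rcases hAB' with rfl | rfl <;> simp_all [eq_comm]

/-- The inductive step of `height_le_height_of_cross_lt`: `P` and `Q` are partial sums of a point
of `K(a;b)` on either side of an index, `u` and `v` its two coordinates there, and the primed
letters are those of a second point with the same image under `δ`. It is applied in both
directions, with the roles of `x` and `y` exchanged. -/
lemma add_lt_add_propagate {P Q P' Q' u v u' v' : ℝ≥0∞} (huv : u + v = u' + v')
    (hQ' : P' + u' = ⊤ → Q' = 0) (h : P + (Q' + v') < P' + (Q + v)) :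
    P + u + Q' < P' + u' + Q ∨ (P + u = ⊤ ∧ P' + u' = ⊤) := by
  by_cases hfin : u + v = ⊤
  · rcases ENNReal.add_eq_top.mp (huv ▸ hfin) with hu' | hv'
    · rw [hu', add_top] at hQ' ⊢
      rw [hQ' rfl, add_zero, top_add]
      by_cases hPu : P + u = ⊤
      · exact Or.inr ⟨hPu, rfl⟩
      · exact Or.inl (lt_top_iff_ne_top.mpr hPu)
    · simp [hv'] at h
  · have hvv : v + v' ≠ ⊤ := by
      have hfin' : u' + v' ≠ ⊤ := huv ▸ hfin
      simp only [ne_eq, ENNReal.add_eq_top, not_or] at hfin hfin' ⊢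
      exact ⟨hfin.2, hfin'.2⟩
    left
    rw [← ENNReal.add_lt_add_iff_right hvv]
    calc P + u + Q' + (v + v') = P + (Q' + v') + (u + v) := by ring
      _ < P' + (Q + v) + (u + v) := ENNReal.add_lt_add_right hfin h
      _ = P' + u' + Q + (v + v') := by rw [huv]; ring

variable {a b : ℤ}

def XSum (k : KAmb a b) (i : ℤ) : ℝ≥0∞ := ∑ l ∈ Finset.Icc b i, Xext a b k l

def YSum (k : KAmb a b) (i : ℤ) : ℝ≥0∞ := ∑ l ∈ Finset.Ioc i a, Yext a b k l

def height (k : KAmb a b) (i : ℤ) : EReal := (XSum k i : EReal) - (YSum k i : EReal)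

lemma sMap_eq_sub_sum_height (σ : EReal → ℝ) (k : KAmb a b) :
    sMap a b σ k = a - ∑ i ∈ Finset.Ico b a, σ (height k i) := rfl

lemma XSum_add_one (k : KAmb a b) {i : ℤ} (h : b ≤ i + 1) :
    XSum k (i + 1) = XSum k i + Xext a b k (i + 1) := by
  rw [XSum, XSum, ← Finset.insert_Icc_right_eq_Icc_add_one h, Finset.sum_insert (by simp),
    add_comm]

lemma YSum_eq_YSum_add_one_add (k : KAmb a b) {i : ℤ} (h : i + 1 ≤ a) :
    YSum k i = YSum k (i + 1) + Yext a b k (i + 1) := by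
  rw [YSum, YSum, ← Finset.insert_Ioc_add_one_left_eq_Ioc h, Finset.sum_insert (by simp),
    add_comm]

lemma Xext_add_Yext_eq_deltaMap (k : KAmb a b) {i : ℤ} (h₁ : b < i) (h₂ : i < a) :
    Xext a b k i + Yext a b k i = deltaMap a b k ⟨i, h₁, h₂⟩ := by
  simp [Xext, Yext, deltaMap, h₁, h₁.le, h₂, h₂.le]

lemma exists_cut_of_mem_KSet {k : KAmb a b} (hk : k ∈ KSet a b) :
    ∃ r, b ≤ r ∧ r ≤ a ∧ (∀ l < r, Xext a b k l = 0) ∧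
      (∀ l, r < l → Yext a b k l = 0) := by
  obtain ⟨r, hbr, hra, hx, hy⟩ := hk
  refine ⟨r, hbr, hra, fun l hl => ?_, fun l hl => ?_⟩
  · unfold Xext; split_ifs with h
    exacts [hx ⟨l, h⟩ hl, rfl]
  · unfold Yext; split_ifs with h
    exacts [hy ⟨l, h⟩ hl, rfl]

lemma Yext_eq_zero_of_XSum_ne_zero {k : KAmb a b} (hk : k ∈ KSet a b) {i l : ℤ}
    (h : XSum k i ≠ 0) (hil : i < l) : Yext a b k l = 0 := by
  obtain ⟨r, -, -, hx, hy⟩ := exists_cut_of_mem_KSet hk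
  obtain ⟨m, hm, hxm⟩ := Finset.exists_ne_zero_of_sum_ne_zero h
  have hrm : r ≤ m := not_lt.mp fun hmr => hxm (hx m hmr)
  exact hy l (by simp only [Finset.mem_Icc] at hm; omega)

lemma Xext_eq_zero_of_YSum_ne_zero {k : KAmb a b} (hk : k ∈ KSet a b) {i l : ℤ}
    (h : YSum k i ≠ 0) (hli : l ≤ i) : Xext a b k l = 0 := by
  obtain ⟨r, -, -, hx, hy⟩ := exists_cut_of_mem_KSet hk
  obtain ⟨m, hm, hym⟩ := Finset.exists_ne_zero_of_sum_ne_zero h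
  have hmr : m ≤ r := not_lt.mp fun hrm => hym (hy m hrm)
  exact hx l (by simp only [Finset.mem_Ioc] at hm; omega)

lemma XSum_eq_zero_or_YSum_eq_zero {k : KAmb a b} (hk : k ∈ KSet a b) (i : ℤ) :
    XSum k i = 0 ∨ YSum k i = 0 := by
  by_cases h : XSum k i = 0
  · exact Or.inl h
  · refine Or.inr (Finset.sum_eq_zero fun l hl => Yext_eq_zero_of_XSum_ne_zero hk h ?_)
    simp only [Finset.mem_Ioc] at hl
    exact hl.1

lemma height_eq_top {k : KAmb a b} (hk : k ∈ KSet a b) {i : ℤ} (h : XSum k i = ⊤) :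
    height k i = ⊤ := by
  have hY : YSum k i = 0 := (XSum_eq_zero_or_YSum_eq_zero hk i).resolve_left (by simp [h])
  simp [height, h, hY]

lemma height_eq_bot (k : KAmb a b) {i : ℤ} (h : YSum k i = ⊤) : height k i = ⊥ := by
  simp [height, h]

lemma height_lt_height {k k' : KAmb a b} (hk : k ∈ KSet a b) (hk' : k' ∈ KSet a b) {i : ℤ}
    (h : XSum k i + YSum k' i < XSum k' i + YSum k i) : height k i < height k' i :=
  coe_sub_coe_lt_of_add_lt (XSum_eq_zero_or_YSum_eq_zero hk i)
    (XSum_eq_zero_or_YSum_eq_zero hk' i) h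

lemma Xext_add_Yext_eq_of_deltaMap_eq {k k' : KAmb a b}
    (hδ : deltaMap a b k = deltaMap a b k') {i : ℤ} (hb : b < i) (ha : i < a) :
    Xext a b k i + Yext a b k i = Xext a b k' i + Yext a b k' i := by
  rw [Xext_add_Yext_eq_deltaMap _ hb ha, Xext_add_Yext_eq_deltaMap _ hb ha, hδ]

lemma cross_lt_add_one {k k' : KAmb a b} (hk' : k' ∈ KSet a b)
    (hδ : deltaMap a b k = deltaMap a b k') {i : ℤ} (hb : b ≤ i) (ha : i + 1 < a)
    (h : XSum k i + YSum k' i < XSum k' i + YSum k i ∨ (XSum k i = ⊤ ∧ XSum k' i = ⊤)) :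
    XSum k (i + 1) + YSum k' (i + 1) < XSum k' (i + 1) + YSum k (i + 1) ∨
      (XSum k (i + 1) = ⊤ ∧ XSum k' (i + 1) = ⊤) := by
  obtain h | ⟨htop, htop'⟩ := h
  swap
  · simp [XSum_add_one k (i := i) (by omega), XSum_add_one k' (i := i) (by omega), htop, htop']
  have hY' (htop : XSum k' (i + 1) = ⊤) : YSum k' (i + 1) = 0 :=
    (XSum_eq_zero_or_YSum_eq_zero hk' _).resolve_left (by simp [htop])
  rw [XSum_add_one k' (by omega)] at hY'
  rw [XSum_add_one k (by omega), XSum_add_one k' (by omega)]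
  rw [YSum_eq_YSum_add_one_add k ha.le, YSum_eq_YSum_add_one_add k' ha.le] at h
  exact add_lt_add_propagate (Xext_add_Yext_eq_of_deltaMap_eq hδ (by omega) ha) hY' h

lemma cross_lt_of_add_one {k k' : KAmb a b} (hk : k ∈ KSet a b)
    (hδ : deltaMap a b k = deltaMap a b k') {i : ℤ} (hb : b ≤ i) (ha : i + 1 < a)
    (h : XSum k (i + 1) + YSum k' (i + 1) < XSum k' (i + 1) + YSum k (i + 1) ∨
      (YSum k (i + 1) = ⊤ ∧ YSum k' (i + 1) = ⊤)) :
    XSum k i + YSum k' i < XSum k' i + YSum k i ∨ (YSum k i = ⊤ ∧ YSum k' i = ⊤) := by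
  obtain h | ⟨htop, htop'⟩ := h
  swap
  · simp [YSum_eq_YSum_add_one_add k ha.le, YSum_eq_YSum_add_one_add k' ha.le, htop, htop']
  have hX (htop : YSum k i = ⊤) : XSum k i = 0 :=
    (XSum_eq_zero_or_YSum_eq_zero hk _).resolve_right (by simp [htop])
  rw [YSum_eq_YSum_add_one_add k ha.le] at hX
  rw [YSum_eq_YSum_add_one_add k ha.le, YSum_eq_YSum_add_one_add k' ha.le, add_comm (XSum k i),
    add_comm (XSum k' i), and_comm]
  rw [XSum_add_one k (by omega), XSum_add_one k' (by omega), add_comm, add_comm (_ + _)] at h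
  refine add_lt_add_propagate ?_ hX h
  rw [add_comm, add_comm (Yext a b k _)]
  exact (Xext_add_Yext_eq_of_deltaMap_eq hδ (by omega) ha).symm

lemma height_le_height_of_cross_lt {k k' : KAmb a b} (hk : k ∈ KSet a b) (hk' : k' ∈ KSet a b)
    (hδ : deltaMap a b k = deltaMap a b k') {j : ℤ} (hj : j ∈ Finset.Ico b a)
    (h : XSum k j + YSum k' j < XSum k' j + YSum k j) {i : ℤ} (hi : i ∈ Finset.Ico b a) :
    height k i ≤ height k' i := by
  rw [Finset.mem_Ico] at hi hj
  rcases le_total j i with hji | hij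
  · have hup : ∀ n, j ≤ n → n < a →
        XSum k n + YSum k' n < XSum k' n + YSum k n ∨ (XSum k n = ⊤ ∧ XSum k' n = ⊤) := by
      intro n hn
      induction n, hn using Int.leInduction with
      | base => exact fun _ => Or.inl h
      | succ n hjn ih => exact fun hn => cross_lt_add_one hk' hδ (by omega) hn (ih (by omega))
    obtain hlt | ⟨htop, htop'⟩ := hup i hji hi.2
    · exact (height_lt_height hk hk' hlt).le
    · rw [height_eq_top hk htop, height_eq_top hk' htop']
  · have hdown : ∀ n ≤ j, b ≤ n →
        XSum k n + YSum k' n < XSum k' n + YSum k n ∨ (YSum k n = ⊤ ∧ YSum k' n = ⊤) := by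
      intro n hn
      induction n, hn using Int.leInductionDown with
      | base => exact fun _ => Or.inl h
      | pred n hnj ih =>
        exact fun hn => by
          simpa using cross_lt_of_add_one hk hδ hn (by omega) (by simpa using ih (by omega))
    obtain hlt | ⟨hbot, hbot'⟩ := hdown i hij hi.1
    · exact (height_lt_height hk hk' hlt).le
    · rw [height_eq_bot k hbot, height_eq_bot k' hbot']

lemma XSum_eq_zero_of_lt (k : KAmb a b) {i : ℤ} (h : i < b) : XSum k i = 0 := by
  simp [XSum, Finset.Icc_eq_empty_of_lt h]

lemma YSum_eq_zero_of_le (k : KAmb a b) {i : ℤ} (h : a ≤ i) : YSum k i = 0 := by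
  simp [YSum, Finset.Ioc_eq_empty_of_le h]

lemma sum_sigma_height_lt {σ : EReal → ℝ} (hσ : StrictMono σ) {k k' : KAmb a b}
    (hk : k ∈ KSet a b) (hk' : k' ∈ KSet a b) (hδ : deltaMap a b k = deltaMap a b k') {j : ℤ}
    (hj : j ∈ Finset.Ico b a) (h : XSum k j + YSum k' j < XSum k' j + YSum k j) :
    ∑ i ∈ Finset.Ico b a, σ (height k i) < ∑ i ∈ Finset.Ico b a, σ (height k' i) :=
  Finset.sum_lt_sum (fun _ hi => hσ.monotone (height_le_height_of_cross_lt hk hk' hδ hj h hi))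
    ⟨j, hj, hσ (height_lt_height hk hk' h)⟩

lemma XSum_eq_and_YSum_eq {σ : EReal → ℝ} (hσ : StrictMono σ) {k k' : KAmb a b}
    (hk : k ∈ KSet a b) (hk' : k' ∈ KSet a b) (hδ : deltaMap a b k = deltaMap a b k')
    (hs : sMap a b σ k = sMap a b σ k') {i : ℤ} (hi : i ∈ Finset.Ico b a) :
    XSum k i = XSum k' i ∧ YSum k i = YSum k' i := by
  rw [sMap_eq_sub_sum_height, sMap_eq_sub_sum_height, sub_right_inj] at hs
  refine eq_and_eq_of_add_eq (XSum_eq_zero_or_YSum_eq_zero hk i)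
    (XSum_eq_zero_or_YSum_eq_zero hk' i) (le_antisymm ?_ ?_)
  · exact not_lt.mp fun h => (sum_sigma_height_lt hσ hk' hk hδ.symm hi h).ne' hs
  · exact not_lt.mp fun h => (sum_sigma_height_lt hσ hk hk' hδ hi h).ne hs

lemma ext_of_Xext_of_Yext {k k' : KAmb a b} (hX : ∀ l, Xext a b k l = Xext a b k' l)
    (hY : ∀ l, Yext a b k l = Yext a b k' l) : k = k' := by
  refine Prod.ext (funext fun j => ?_) (funext fun j => ?_)
  · simpa [Xext, j.2] using hX j
  · simpa [Yext, j.2] using hY j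

lemma Xext_eq_of_XSum_eq {k k' : KAmb a b} (hk : k ∈ KSet a b) (hk' : k' ∈ KSet a b)
    (hδ : deltaMap a b k = deltaMap a b k') (hX : ∀ i ∈ Finset.Ico b a, XSum k i = XSum k' i)
    (l : ℤ) : Xext a b k l = Xext a b k' l := by
  by_cases hl : b ≤ l ∧ l < a
  swap
  · simp [Xext, hl]
  have hrec (k : KAmb a b) : XSum k l = XSum k (l - 1) + Xext a b k l := by
    simpa using XSum_add_one k (i := l - 1) (by omega)
  have hprev : XSum k (l - 1) = XSum k' (l - 1) := by
    rcases lt_or_ge (l - 1) b with h | h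
    · rw [XSum_eq_zero_of_lt k h, XSum_eq_zero_of_lt k' h]
    · exact hX _ (Finset.mem_Ico.mpr ⟨h, by omega⟩)
  by_cases h0 : XSum k (l - 1) = 0
  · calc Xext a b k l = XSum k l := by rw [hrec k, h0, zero_add]
      _ = XSum k' l := hX l (Finset.mem_Ico.mpr hl)
      _ = Xext a b k' l := by rw [hrec k', ← hprev, h0, zero_add]
  · have hbl : b < l := by
      by_contra h; exact h0 (XSum_eq_zero_of_lt k (by omega))
    have h0' : XSum k' (l - 1) ≠ 0 := hprev ▸ h0
    calc Xext a b k l = Xext a b k l + Yext a b k l := by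
          rw [Yext_eq_zero_of_XSum_ne_zero hk h0 (by omega), add_zero]
      _ = Xext a b k' l + Yext a b k' l := Xext_add_Yext_eq_of_deltaMap_eq hδ hbl hl.2
      _ = Xext a b k' l := by rw [Yext_eq_zero_of_XSum_ne_zero hk' h0' (by omega), add_zero]

lemma Yext_eq_of_YSum_eq {k k' : KAmb a b} (hk : k ∈ KSet a b) (hk' : k' ∈ KSet a b)
    (hδ : deltaMap a b k = deltaMap a b k') (hY : ∀ i ∈ Finset.Ico b a, YSum k i = YSum k' i)
    (l : ℤ) : Yext a b k l = Yext a b k' l := by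
  by_cases hl : b < l ∧ l ≤ a
  swap
  · simp [Yext, hl]
  have hrec (k : KAmb a b) : YSum k (l - 1) = YSum k l + Yext a b k l := by
    simpa using YSum_eq_YSum_add_one_add k (i := l - 1) (by omega)
  have hcur : YSum k l = YSum k' l := by
    rcases le_or_gt a l with h | h
    · rw [YSum_eq_zero_of_le k h, YSum_eq_zero_of_le k' h]
    · exact hY _ (Finset.mem_Ico.mpr ⟨hl.1.le, h⟩)
  by_cases h0 : YSum k l = 0
  · calc Yext a b k l = YSum k (l - 1) := by rw [hrec k, h0, zero_add]
      _ = YSum k' (l - 1) := hY _ (Finset.mem_Ico.mpr ⟨by omega, by omega⟩)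
      _ = Yext a b k' l := by rw [hrec k', ← hcur, h0, zero_add]
  · have hla : l < a := by
      by_contra h; exact h0 (YSum_eq_zero_of_le k (by omega))
    have h0' : YSum k' l ≠ 0 := hcur ▸ h0
    calc Yext a b k l = Xext a b k l + Yext a b k l := by
          rw [Xext_eq_zero_of_YSum_ne_zero hk h0 le_rfl, zero_add]
      _ = Xext a b k' l + Yext a b k' l := Xext_add_Yext_eq_of_deltaMap_eq hδ hl.1 hla
      _ = Yext a b k' l := by rw [Xext_eq_zero_of_YSum_ne_zero hk' h0' le_rfl, zero_add]

lemma eq_of_deltaMap_eq_of_sMap_eq {σ : EReal → ℝ} (hσ : StrictMono σ) {k k' : KAmb a b}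
    (hk : k ∈ KSet a b) (hk' : k' ∈ KSet a b) (hδ : deltaMap a b k = deltaMap a b k')
    (hs : sMap a b σ k = sMap a b σ k') : k = k' :=
  ext_of_Xext_of_Yext
    (Xext_eq_of_XSum_eq hk hk' hδ fun _ hi => (XSum_eq_and_YSum_eq hσ hk hk' hδ hs hi).1)
    (Yext_eq_of_YSum_eq hk hk' hδ fun _ hi => (XSum_eq_and_YSum_eq hσ hk hk' hδ hs hi).2)

lemma continuous_Xext (l : ℤ) : Continuous fun k : KAmb a b => Xext a b k l := by
  unfold Xext; split_ifs <;> fun_prop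

lemma continuous_Yext (l : ℤ) : Continuous fun k : KAmb a b => Yext a b k l := by
  unfold Yext; split_ifs <;> fun_prop

lemma continuousAt_ereal_sub {x y : EReal} (h : x ≠ ⊤ ∨ y ≠ ⊤) (h' : x ≠ ⊥ ∨ y ≠ ⊥) :
    ContinuousAt (fun p : EReal × EReal => p.1 - p.2) (x, y) := by
  have hneg : ContinuousAt (fun p : EReal × EReal => (p.1, -p.2)) (x, y) := by fun_prop
  exact (EReal.continuousAt_add (by simpa using h) (by simpa using h')).comp hneg

lemma continuousOn_height (i : ℤ) :
    ContinuousOn (fun k : KAmb a b => height k i) (KSet a b) := by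
  intro k hk
  have hsub : ContinuousAt (fun p : EReal × EReal => p.1 - p.2) (XSum k i, YSum k i) := by
    refine continuousAt_ereal_sub ?_ (Or.inl (by simp))
    rcases XSum_eq_zero_or_YSum_eq_zero hk i with h | h <;> simp [h]
  have hpair : Continuous fun k : KAmb a b => ((XSum k i : EReal), (YSum k i : EReal)) :=
    (continuous_coe_ennreal_ereal.comp (continuous_finsetSum _ fun l _ => continuous_Xext l)).prodMk
      (continuous_coe_ennreal_ereal.comp (continuous_finsetSum _ fun l _ => continuous_Yext l))
  exact (ContinuousAt.comp (x := k) hsub hpair.continuousAt).continuousWithinAt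

lemma continuousOn_sMap {σ : EReal → ℝ} (hσ : Continuous σ) :
    ContinuousOn (sMap a b σ) (KSet a b) :=
  continuousOn_const.sub
    (continuousOn_finsetSum _ fun _ _ => hσ.comp_continuousOn (continuousOn_height _))

lemma continuous_deltaMap : Continuous (deltaMap a b) :=
  continuous_pi fun _ => by unfold deltaMap; fun_prop

lemma isClosed_KSet : IsClosed (KSet a b) := by
  have hK : KSet a b = ⋃ r ∈ Finset.Icc b a,
      (⋂ j : {j : ℤ // b ≤ j ∧ j < a}, {k : KAmb a b | (j : ℤ) < r → k.1 j = 0}) ∩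
      ⋂ j : {j : ℤ // b < j ∧ j ≤ a}, {k : KAmb a b | r < (j : ℤ) → k.2 j = 0} := by
    ext k
    simp only [KSet, Set.mem_ofPred_eq, Set.mem_iUnion, Finset.mem_Icc, exists_prop, and_assoc,
      Set.mem_inter_iff, Set.mem_iInter]
  rw [hK]
  refine isClosed_biUnion_finset fun r _ => (isClosed_iInter fun j => ?_).inter
    (isClosed_iInter fun j => ?_)
  · exact isClosed_imp isOpen_const (isClosed_eq (by fun_prop) continuous_const)
  · exact isClosed_imp isOpen_const (isClosed_eq (by fun_prop) continuous_const)

/-- `z` extended by `∞` outside `(b,a)`: this lets `x_b` and `y_a`, which `δ` does not see, run up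
to `∞` in the end pieces `r = b` and `r = a` of the fibre. -/
def zHat (z : Jspace a b) (j : ℤ) : ℝ≥0∞ :=
  if h : b < j ∧ j < a then z ⟨j, h⟩ else ⊤

def splitAt (z : Jspace a b) (r : ℤ) (p : ℝ≥0∞ × ℝ≥0∞) : KAmb a b :=
  (fun j => if (j : ℤ) < r then 0 else if (j : ℤ) = r then p.1 else zHat z j,
   fun j => if r < (j : ℤ) then 0 else if (j : ℤ) = r then p.2 else zHat z j)

lemma splitAt_mem_KSet (z : Jspace a b) {r : ℤ} (hbr : b ≤ r) (hra : r ≤ a)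
    (p : ℝ≥0∞ × ℝ≥0∞) : splitAt z r p ∈ KSet a b :=
  ⟨r, hbr, hra, fun _ hj => if_pos hj, fun _ hj => if_pos hj⟩

lemma deltaMap_splitAt {z : Jspace a b} {r : ℤ} {p : ℝ≥0∞ × ℝ≥0∞}
    (hp : p.1 + p.2 = zHat z r) : deltaMap a b (splitAt z r p) = z := by
  funext ⟨j, hbj, hja⟩
  rcases lt_trichotomy j r with h | rfl | h
  · simp [deltaMap, splitAt, zHat, h, h.not_gt, h.ne, hbj, hja]
  · simpa [deltaMap, splitAt, zHat, hbj, hja] using hp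
  · simp [deltaMap, splitAt, zHat, h, h.not_gt, h.ne', hbj, hja]

lemma continuous_splitAt (z : Jspace a b) (r : ℤ) : Continuous (splitAt z r) := by
  refine .prodMk (continuous_pi fun j => ?_) (continuous_pi fun j => ?_) <;>
    · split_ifs <;> fun_prop

lemma splitAt_zero_zHat (z : Jspace a b) (r : ℤ) :
    splitAt z r (0, zHat z r) = splitAt z (r + 1) (zHat z (r + 1), 0) := by
  refine Prod.ext (funext fun j => ?_) (funext fun j => ?_) <;>
    · simp only [splitAt]; split_ifs <;> first | rfl | omega | simp_all

lemma isPreconnected_setOf_add_eq (w : ℝ≥0∞) :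
    IsPreconnected {p : ℝ≥0∞ × ℝ≥0∞ | p.1 + p.2 = w} := by
  by_cases hw : w = ⊤
  · have h : {p : ℝ≥0∞ × ℝ≥0∞ | p.1 + p.2 = w} = {⊤} ×ˢ Set.univ ∪ Set.univ ×ˢ {⊤} := by
      ext p; simp [hw, ENNReal.add_eq_top]
    rw [h]
    exact (isPreconnected_singleton.prod isPreconnected_univ).union (⊤, ⊤) (by simp) (by simp)
      (isPreconnected_univ.prod isPreconnected_singleton)
  · have h : {p : ℝ≥0∞ × ℝ≥0∞ | p.1 + p.2 = w} = (fun u => (u, w - u)) '' Set.Iic w := by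
      ext ⟨u, v⟩
      constructor
      · rintro (huv : u + v = w)
        have hu : u ≠ ⊤ := fun hu => hw (by simp [← huv, hu])
        refine ⟨u, huv ▸ Set.mem_Iic.mpr le_self_add, ?_⟩
        simp [← huv, ENNReal.add_sub_cancel_left hu]
      · rintro ⟨u, hu, ⟨⟩⟩
        exact add_tsub_cancel_of_le hu
    rw [h]
    exact isPreconnected_Iic.image _
      (continuous_id.prodMk (ENNReal.continuous_sub_left hw)).continuousOn

lemma isPreconnected_biUnion_splitAt (z : Jspace a b) :
    IsPreconnected (⋃ r ∈ Set.Icc b a, splitAt z r '' {p | p.1 + p.2 = zHat z r}) := by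
  refine .biUnion_of_chain Set.ordConnected_Icc
    (fun r _ => (isPreconnected_setOf_add_eq _).image _ (continuous_splitAt z r).continuousOn)
    fun r _ _ => ⟨splitAt z r (0, zHat z r), ⟨_, zero_add _, rfl⟩, ?_⟩
  rw [Order.succ_eq_add_one, splitAt_zero_zHat]
  exact ⟨_, add_zero _, rfl⟩

lemma card_Ico_eq_sub (hab : b ≤ a) : ((Finset.Ico b a).card : ℝ) = a - b := by
  rw [Int.card_Ico, ← Int.cast_natCast, Int.toNat_of_nonneg (by omega), Int.cast_sub]

lemma sMap_splitAt_left {σ : EReal → ℝ} (hσ : σ ⊤ = 1) (hab : b ≤ a) (z : Jspace a b) :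
    sMap a b σ (splitAt z b (⊤, 0)) = b := by
  have hterm : ∀ i ∈ Finset.Ico b a, σ (height (splitAt z b (⊤, 0)) i) = 1 := by
    intro i hi
    rw [Finset.mem_Ico] at hi
    have hXb : Xext a b (splitAt z b (⊤, 0)) b = ⊤ := by
      simp [Xext, splitAt, hi.1.trans_lt hi.2]
    have hX : XSum (splitAt z b (⊤, 0)) i = ⊤ := top_unique <| hXb.ge.trans <|
      Finset.single_le_sum (fun _ _ => zero_le) (Finset.mem_Icc.mpr ⟨le_rfl, hi.1⟩)
    rw [height_eq_top (splitAt_mem_KSet z le_rfl hab _) hX, hσ]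
  rw [sMap_eq_sub_sum_height, Finset.sum_congr rfl hterm, Finset.sum_const, nsmul_one,
    card_Ico_eq_sub hab]
  ring

lemma sMap_splitAt_right {σ : EReal → ℝ} (hσ : σ ⊥ = 0) (z : Jspace a b) :
    sMap a b σ (splitAt z a (0, ⊤)) = a := by
  have hterm : ∀ i ∈ Finset.Ico b a, σ (height (splitAt z a (0, ⊤)) i) = 0 := by
    intro i hi
    rw [Finset.mem_Ico] at hi
    have hYa : Yext a b (splitAt z a (0, ⊤)) a = ⊤ := by
      simp [Yext, splitAt, hi.1.trans_lt hi.2]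
    have hY : YSum (splitAt z a (0, ⊤)) i = ⊤ := top_unique <| hYa.ge.trans <|
      Finset.single_le_sum (fun _ _ => zero_le) (Finset.mem_Ioc.mpr ⟨hi.2, le_rfl⟩)
    rw [height_eq_bot _ hY, hσ]
  rw [sMap_eq_sub_sum_height, Finset.sum_congr rfl hterm, Finset.sum_const_zero, sub_zero]

lemma exists_mem_KSet_deltaMap_eq_sMap_eq {σ : EReal → ℝ} (hσ : Continuous σ)
    (hσ0 : σ ⊥ = 0) (hσ1 : σ ⊤ = 1) (z : Jspace a b) {t : ℝ} (ht : t ∈ Set.Icc (b : ℝ) a) :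
    ∃ k ∈ KSet a b, deltaMap a b k = z ∧ sMap a b σ k = t := by
  have hab : b ≤ a := by exact_mod_cast ht.1.trans ht.2
  set C := ⋃ r ∈ Set.Icc b a, splitAt z r '' {p | p.1 + p.2 = zHat z r}
  have hC : C ⊆ KSet a b ∩ {k | deltaMap a b k = z} := by
    simp only [C, Set.iUnion₂_subset_iff, Set.image_subset_iff]
    exact fun r hr p hp => ⟨splitAt_mem_KSet z hr.1 hr.2 p, deltaMap_splitAt hp⟩
  have hb : (b : ℝ) ∈ sMap a b σ '' C := ⟨_, Set.mem_biUnion ⟨le_rfl, hab⟩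
    ⟨(⊤, 0), by simp [zHat], rfl⟩, sMap_splitAt_left hσ1 hab z⟩
  have ha : (a : ℝ) ∈ sMap a b σ '' C := ⟨_, Set.mem_biUnion ⟨hab, le_rfl⟩
    ⟨(0, ⊤), by simp [zHat], rfl⟩, sMap_splitAt_right hσ0 z⟩
  obtain ⟨k, hk, rfl⟩ := ((isPreconnected_biUnion_splitAt z).image _
    ((continuousOn_sMap hσ).mono fun _ hk => (hC hk).1)).Icc_subset hb ha ht
  exact ⟨k, (hC hk).1, (hC hk).2, rfl⟩

lemma sMap_mem_Icc {σ : EReal → ℝ} (hσ : ∀ t, σ t ∈ Set.Icc (0 : ℝ) 1) {k : KAmb a b}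
    (hk : k ∈ KSet a b) : sMap a b σ k ∈ Set.Icc (b : ℝ) a := by
  obtain ⟨r, hbr, hra, -⟩ := hk
  have h0 : 0 ≤ ∑ i ∈ Finset.Ico b a, σ (height k i) :=
    Finset.sum_nonneg fun _ _ => (hσ _).1
  have h1 : ∑ i ∈ Finset.Ico b a, σ (height k i) ≤ a - b := by
    refine (Finset.sum_le_card_nsmul _ _ 1 fun _ _ => (hσ _).2).trans_eq ?_
    rw [nsmul_one, card_Ico_eq_sub (hbr.trans hra)]
  rw [sMap_eq_sub_sum_height]
  constructor <;> linarith

section Sigma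

variable (ς : EReal ≃ₜ Set.Icc (0 : ℝ) 1)

lemma sigmaR_mem_Icc (t : EReal) : sigmaR ς t ∈ Set.Icc (0 : ℝ) 1 := (ς t).2

lemma continuous_sigmaR : Continuous (sigmaR ς) := continuous_subtype_val.comp ς.continuous

variable {ς}

lemma strictMono_sigmaR (hς : Monotone (sigmaR ς)) : StrictMono (sigmaR ς) :=
  hς.strictMono_of_injective fun _ _ h => ς.injective (Subtype.ext h)

lemma sigmaR_top (hς : Monotone (sigmaR ς)) : sigmaR ς ⊤ = 1 := by
  obtain ⟨w, hw⟩ := ς.surjective ⟨1, by norm_num⟩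
  exact le_antisymm (sigmaR_mem_Icc ς ⊤).2 (by simpa [sigmaR, hw] using hς (le_top : w ≤ ⊤))

lemma sigmaR_bot (hς : Monotone (sigmaR ς)) : sigmaR ς ⊥ = 0 := by
  obtain ⟨w, hw⟩ := ς.surjective ⟨0, by norm_num⟩
  exact le_antisymm (by simpa [sigmaR, hw] using hς (bot_le : ⊥ ≤ w)) (sigmaR_mem_Icc ς ⊥).1

end Sigma

end JKFlow

theorem statement0_general (a b : ℤ)
    (ς : EReal ≃ₜ Set.Icc (0 : ℝ) 1) (hς : Monotone (sigmaR ς)) :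
    ∃ e : ↥(KSet a b) ≃ₜ Jspace a b × ↥(Set.Icc (b : ℝ) (a : ℝ)),
      ∀ k : ↥(KSet a b),
        (e k).1 = deltaMap a b (k : KAmb a b) ∧
          ((e k).2 : ℝ) = sMap a b (sigmaR ς) (k : KAmb a b) := by
  let F : KSet a b → Jspace a b × Set.Icc (b : ℝ) a :=
    fun k => (deltaMap a b k, ⟨sMap a b (sigmaR ς) k, sMap_mem_Icc (sigmaR_mem_Icc ς) k.2⟩)
  have hF : Continuous F := (continuous_deltaMap.comp continuous_subtype_val).prodMk
    ((continuousOn_sMap (continuous_sigmaR ς)).domRestrict.subtype_mk _)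
  have hinj : F.Injective := fun k k' h => Subtype.ext <|
    eq_of_deltaMap_eq_of_sMap_eq (strictMono_sigmaR hς) k.2 k'.2 (congrArg Prod.fst h)
      (congrArg (fun p => (p.2 : ℝ)) h)
  have hsurj : F.Surjective := by
    rintro ⟨z, t, ht⟩
    obtain ⟨k, hk, hδ, hs⟩ := exists_mem_KSet_deltaMap_eq_sMap_eq (continuous_sigmaR ς)
      (sigmaR_bot hς) (sigmaR_top hς) z ht
    exact ⟨⟨k, hk⟩, Prod.ext hδ (Subtype.ext hs)⟩
  have : CompactSpace (KSet a b) := isCompact_iff_compactSpace.mp isClosed_KSet.isCompact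
  exact ⟨hF.homeoOfEquivCompactToT2 (f := .ofBijective F ⟨hinj, hsurj⟩),
    fun _ => ⟨rfl, rfl⟩⟩

/-- Let `a ≥ b` be integers and let `ς : [-∞,∞] → [0,1]` be an
order-preserving homeomorphism.  Then `δ_{ab} × s_{ab} : K(a;b) → J(a,b) × [b,a]` is a
homeomorphism (with `K(a;b)` carrying the subspace topology of the ambient product,
`J(a,b)` the product topology and `[b,a] ⊆ ℝ` the standard topology). -/
theorem statement0 (a b : ℤ) (hab : b ≤ a)
    (ς : EReal ≃ₜ Set.Icc (0 : ℝ) 1) (hς : Monotone (sigmaR ς)) :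
    ∃ e : ↥(KSet a b) ≃ₜ Jspace a b × ↥(Set.Icc (b : ℝ) (a : ℝ)),
      ∀ k : ↥(KSet a b),
        (e k).1 = deltaMap a b (k : KAmb a b) ∧
          ((e k).2 : ℝ) = sMap a b (sigmaR ς) (k : KAmb a b) :=
  statement0_general a b ς hς
end
end

section
/- Let a > b be integers and let ς : [-∞,∞] → [0,1] be an order-preserving homeomorphism. Then the image of ∂K(a;b) under the map δ_{ab} × s_{ab} : K(a;b) → J(a,b) × [b,a] is exactly the set (∂J(a,b) × [b,a]) ∪ (J(a,b) × {b,a}). -/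
open scoped ENNReal

noncomputable section

namespace JKFlow

-- ### auxiliary lemmas

lemma Xsum_zero (a b : ℤ) (k : KAmb a b) (r i : ℤ)
    (hw1 : ∀ j : {j : ℤ // b ≤ j ∧ j < a}, (j : ℤ) < r → k.1 j = 0)
    (hi : i < r) : ∑ l ∈ Finset.Icc b i, Xext a b k l = 0 := by
  refine Finset.sum_eq_zero fun l hl => ?_
  rw [Finset.mem_Icc] at hl
  unfold Xext
  split_ifs with h
  · exact hw1 ⟨l, h⟩ (show l < r by omega)
  · rfl

lemma Ysum_zero (a b : ℤ) (k : KAmb a b) (r i : ℤ)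
    (hw2 : ∀ j : {j : ℤ // b < j ∧ j ≤ a}, r < (j : ℤ) → k.2 j = 0)
    (hi : r ≤ i) : ∑ l ∈ Finset.Ioc i a, Yext a b k l = 0 := by
  refine Finset.sum_eq_zero fun l hl => ?_
  rw [Finset.mem_Ioc] at hl
  unfold Yext
  split_ifs with h
  · exact hw2 ⟨l, h⟩ (show r < l by omega)
  · rfl

lemma Xsum_top (a b : ℤ) (k : KAmb a b) (i l0 : ℤ) (h : b ≤ l0 ∧ l0 < a)
    (hk : k.1 ⟨l0, h⟩ = ⊤) (hl : l0 ≤ i) :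
    ∑ l ∈ Finset.Icc b i, Xext a b k l = ⊤ :=
  ENNReal.sum_eq_top.2 ⟨l0, Finset.mem_Icc.2 ⟨h.1, hl⟩, by
    unfold Xext; rw [dif_pos h]; exact hk⟩

lemma Ysum_top (a b : ℤ) (k : KAmb a b) (i l0 : ℤ) (h : b < l0 ∧ l0 ≤ a)
    (hk : k.2 ⟨l0, h⟩ = ⊤) (hl : i < l0) :
    ∑ l ∈ Finset.Ioc i a, Yext a b k l = ⊤ :=
  ENNReal.sum_eq_top.2 ⟨l0, Finset.mem_Ioc.2 ⟨hl, h.2⟩, by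
    unfold Yext; rw [dif_pos h]; exact hk⟩

lemma cast_toNat (a b : ℤ) (hab : b ≤ a) : (((a - b).toNat : ℝ)) = (a : ℝ) - b := by
  have h := Int.toNat_of_nonneg (sub_nonneg.2 hab)
  exact_mod_cast congrArg (Int.cast : ℤ → ℝ) h

lemma sMap_bounds (a b : ℤ) (hab : b ≤ a) (σ : EReal → ℝ)
    (h01 : ∀ x, σ x ∈ Set.Icc (0 : ℝ) 1) (k : KAmb a b) :
    sMap a b σ k ∈ Set.Icc (b : ℝ) (a : ℝ) := by
  unfold sMap
  constructor
  · have h1 : (∑ i ∈ Finset.Ico b a,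
        σ ((↑(∑ l ∈ Finset.Icc b i, Xext a b k l) : EReal)
          - (↑(∑ l ∈ Finset.Ioc i a, Yext a b k l) : EReal))) ≤
        (Finset.Ico b a).card • (1 : ℝ) :=
      Finset.sum_le_card_nsmul _ _ 1 fun i _ => (h01 _).2
    rw [Int.card_Ico, nsmul_eq_mul, mul_one, cast_toNat a b hab] at h1
    linarith
  · have h0 : (0:ℝ) ≤ ∑ i ∈ Finset.Ico b a,
        σ ((↑(∑ l ∈ Finset.Icc b i, Xext a b k l) : EReal)
          - (↑(∑ l ∈ Finset.Ioc i a, Yext a b k l) : EReal)) :=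
      Finset.sum_nonneg fun i _ => (h01 _).1
    linarith


lemma sMap_left (a b : ℤ) (hab : b < a) (σ : EReal → ℝ) (htop : σ ⊤ = 1)
    (k : KAmb a b) (hx : k.1 ⟨b, le_refl b, hab⟩ = ⊤) (hy : ∀ j, k.2 j = 0) :
    sMap a b σ k = b := by
  unfold sMap
  have h1 : ∀ i ∈ Finset.Ico b a,
      σ ((↑(∑ l ∈ Finset.Icc b i, Xext a b k l) : EReal)
        - (↑(∑ l ∈ Finset.Ioc i a, Yext a b k l) : EReal)) = 1 := by
    intro i hi
    rw [Finset.mem_Ico] at hi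
    have hY : ∑ l ∈ Finset.Ioc i a, Yext a b k l = 0 :=
      Finset.sum_eq_zero fun l hl => by
        unfold Yext; split_ifs with h
        · exact hy _
        · rfl
    rw [Xsum_top a b k i b ⟨le_refl b, hab⟩ hx hi.1, hY,
      EReal.coe_ennreal_top, EReal.coe_ennreal_zero, sub_zero, htop]
  rw [Finset.sum_congr rfl h1, Finset.sum_const, Int.card_Ico, nsmul_eq_mul,
    mul_one, cast_toNat a b hab.le]
  ring

lemma sMap_right (a b : ℤ) (hab : b < a) (σ : EReal → ℝ) (hbot : σ ⊥ = 0)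
    (k : KAmb a b) (hy : k.2 ⟨a, hab, le_refl a⟩ = ⊤) (hx : ∀ j, k.1 j = 0) :
    sMap a b σ k = a := by
  unfold sMap
  have h1 : ∀ i ∈ Finset.Ico b a,
      σ ((↑(∑ l ∈ Finset.Icc b i, Xext a b k l) : EReal)
        - (↑(∑ l ∈ Finset.Ioc i a, Yext a b k l) : EReal)) = 0 := by
    intro i hi
    rw [Finset.mem_Ico] at hi
    have hX : ∑ l ∈ Finset.Icc b i, Xext a b k l = 0 :=
      Finset.sum_eq_zero fun l hl => by
        unfold Xext; split_ifs with h
        · exact hx _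
        · rfl
    rw [hX, Ysum_top a b k i a ⟨hab, le_refl a⟩ hy hi.2,
      EReal.coe_ennreal_top, EReal.coe_ennreal_zero, zero_sub, EReal.neg_top, hbot]
  rw [Finset.sum_congr rfl h1, Finset.sum_const, nsmul_eq_mul, mul_zero, sub_zero]

lemma sMap_mid (a b r : ℤ) (hbr : b < r) (hra : r < a) (σ : EReal → ℝ)
    (htop : σ ⊤ = 1) (hbot : σ ⊥ = 0) (k : KAmb a b)
    (hw1 : ∀ j : {j : ℤ // b ≤ j ∧ j < a}, (j : ℤ) < r → k.1 j = 0)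
    (hw2 : ∀ j : {j : ℤ // b < j ∧ j ≤ a}, r < (j : ℤ) → k.2 j = 0)
    (hx : k.1 ⟨r, hbr.le, hra⟩ = ⊤) (hy : k.2 ⟨r, hbr, hra.le⟩ = ⊤) :
    sMap a b σ k = r := by
  unfold sMap
  rw [← Finset.Ico_union_Ico_eq_Ico (show b ≤ r by omega) (show r ≤ a by omega),
    Finset.sum_union (Finset.Ico_disjoint_Ico_consecutive b r a)]
  have hL : (∑ i ∈ Finset.Ico b r,
      σ ((↑(∑ l ∈ Finset.Icc b i, Xext a b k l) : EReal)
        - (↑(∑ l ∈ Finset.Ioc i a, Yext a b k l) : EReal))) = 0 :=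
    Finset.sum_eq_zero fun i hi => by
      rw [Finset.mem_Ico] at hi
      rw [Xsum_zero a b k r i hw1 hi.2, Ysum_top a b k i r ⟨hbr, hra.le⟩ hy hi.2,
        EReal.coe_ennreal_top, EReal.coe_ennreal_zero, zero_sub, EReal.neg_top, hbot]
  have hR : ∀ i ∈ Finset.Ico r a,
      σ ((↑(∑ l ∈ Finset.Icc b i, Xext a b k l) : EReal)
        - (↑(∑ l ∈ Finset.Ioc i a, Yext a b k l) : EReal)) = 1 := by
    intro i hi
    rw [Finset.mem_Ico] at hi
    rw [Ysum_zero a b k r i hw2 hi.1, Xsum_top a b k i r ⟨hbr.le, hra⟩ hx hi.1,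
      EReal.coe_ennreal_top, EReal.coe_ennreal_zero, sub_zero, htop]
  rw [hL, Finset.sum_congr rfl hR, Finset.sum_const, Int.card_Ico, nsmul_eq_mul,
    mul_one, zero_add, cast_toNat a r hra.le]
  ring

lemma sMap_continuous {γ : Type} [TopologicalSpace γ] (a b : ℤ) (σ : EReal → ℝ)
    (hσc : Continuous σ) (P : γ → KAmb a b) (r : ℤ)
    (h1 : ∀ j, Continuous fun c => (P c).1 j)
    (h2 : ∀ j, Continuous fun c => (P c).2 j)
    (hw1 : ∀ c (j : {j : ℤ // b ≤ j ∧ j < a}), (j : ℤ) < r → (P c).1 j = 0)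
    (hw2 : ∀ c (j : {j : ℤ // b < j ∧ j ≤ a}), r < (j : ℤ) → (P c).2 j = 0) :
    Continuous fun c => sMap a b σ (P c) := by
  unfold sMap
  refine Continuous.sub continuous_const (continuous_finset_sum _ fun i hi => ?_)
  have hXc : Continuous fun c => ∑ l ∈ Finset.Icc b i, Xext a b (P c) l := by
    refine continuous_finset_sum _ fun l _ => ?_
    by_cases h : b ≤ l ∧ l < a
    · simp only [Xext, dif_pos h]; exact h1 _
    · simp only [Xext, dif_neg h]; exact continuous_const
  have hYc : Continuous fun c => ∑ l ∈ Finset.Ioc i a, Yext a b (P c) l := by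
    refine continuous_finset_sum _ fun l _ => ?_
    by_cases h : b < l ∧ l ≤ a
    · simp only [Yext, dif_pos h]; exact h2 _
    · simp only [Yext, dif_neg h]; exact continuous_const
  rcases lt_or_ge i r with hir | hri
  · have hX : ∀ c, (∑ l ∈ Finset.Icc b i, Xext a b (P c) l) = 0 :=
      fun c => Xsum_zero a b (P c) r i (hw1 c) hir
    have heq : (fun c => σ ((↑(∑ l ∈ Finset.Icc b i, Xext a b (P c) l) : EReal)
          - (↑(∑ l ∈ Finset.Ioc i a, Yext a b (P c) l) : EReal)))
        = fun c => σ (-(↑(∑ l ∈ Finset.Ioc i a, Yext a b (P c) l) : EReal)) := by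
      funext c
      rw [hX c, EReal.coe_ennreal_zero, zero_sub]
    rw [heq]
    exact hσc.comp ((continuous_coe_ennreal_ereal.comp hYc).neg)
  · have hY : ∀ c, (∑ l ∈ Finset.Ioc i a, Yext a b (P c) l) = 0 :=
      fun c => Ysum_zero a b (P c) r i (hw2 c) hri
    have heq : (fun c => σ ((↑(∑ l ∈ Finset.Icc b i, Xext a b (P c) l) : EReal)
          - (↑(∑ l ∈ Finset.Ioc i a, Yext a b (P c) l) : EReal)))
        = fun c => σ ((↑(∑ l ∈ Finset.Icc b i, Xext a b (P c) l) : EReal)) := by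
      funext c
      rw [hY c, EReal.coe_ennreal_zero, sub_zero]
    rw [heq]
    exact hσc.comp (continuous_coe_ennreal_ereal.comp hXc)


def zed (a b : ℤ) (z : Jspace a b) (j : ℤ) : ℝ≥0∞ :=
  if h : b < j ∧ j < a then z ⟨j, h⟩ else 0

def kk (a b : ℤ) (z : Jspace a b) (r : ℤ) (u v : ℝ≥0∞) : KAmb a b :=
  (fun j => if r < (j : ℤ) then zed a b z j else if (j : ℤ) = r then u else 0,
   fun j => if (j : ℤ) < r then zed a b z j else if (j : ℤ) = r then v else 0)

lemma zed_spec (a b : ℤ) (z : Jspace a b) (j : {j : ℤ // b < j ∧ j < a}) :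
    zed a b z j = z j := by
  rw [zed, dif_pos j.2]

lemma zed_out (a b : ℤ) (z : Jspace a b) (j : ℤ) (h : ¬(b < j ∧ j < a)) :
    zed a b z j = 0 := dif_neg h

lemma kk_w1 (a b : ℤ) (z : Jspace a b) (r : ℤ) (u v : ℝ≥0∞)
    (j : {j : ℤ // b ≤ j ∧ j < a}) (hj : (j : ℤ) < r) :
    (kk a b z r u v).1 j = 0 := by
  simp only [kk]
  rw [if_neg (by omega), if_neg (by omega)]

lemma kk_w2 (a b : ℤ) (z : Jspace a b) (r : ℤ) (u v : ℝ≥0∞)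
    (j : {j : ℤ // b < j ∧ j ≤ a}) (hj : r < (j : ℤ)) :
    (kk a b z r u v).2 j = 0 := by
  simp only [kk]
  rw [if_neg (by omega), if_neg (by omega)]

lemma kk_x_at (a b : ℤ) (z : Jspace a b) (r : ℤ) (u v : ℝ≥0∞)
    (h : b ≤ r ∧ r < a) : (kk a b z r u v).1 ⟨r, h⟩ = u := by
  simp only [kk]
  rw [if_neg (by omega)]
  simp

lemma kk_y_at (a b : ℤ) (z : Jspace a b) (r : ℤ) (u v : ℝ≥0∞)
    (h : b < r ∧ r ≤ a) : (kk a b z r u v).2 ⟨r, h⟩ = v := by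
  simp only [kk]
  rw [if_neg (by omega)]
  simp

lemma kk_x_gt (a b : ℤ) (z : Jspace a b) (r : ℤ) (u v : ℝ≥0∞)
    (j : {j : ℤ // b ≤ j ∧ j < a}) (hj : r < (j : ℤ)) :
    (kk a b z r u v).1 j = zed a b z j := by
  simp only [kk]
  rw [if_pos hj]

lemma kk_y_lt (a b : ℤ) (z : Jspace a b) (r : ℤ) (u v : ℝ≥0∞)
    (j : {j : ℤ // b < j ∧ j ≤ a}) (hj : (j : ℤ) < r) :
    (kk a b z r u v).2 j = zed a b z j := by
  simp only [kk]
  rw [if_pos hj]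

lemma kk_mem_KSet (a b : ℤ) (z : Jspace a b) (r : ℤ) (u v : ℝ≥0∞)
    (hbr : b ≤ r) (hra : r ≤ a) : kk a b z r u v ∈ KSet a b :=
  ⟨r, hbr, hra, fun j hj => kk_w1 a b z r u v j hj, fun j hj => kk_w2 a b z r u v j hj⟩

lemma delta_kk (a b : ℤ) (z : Jspace a b) (r : ℤ) (u v : ℝ≥0∞)
    (huv : b < r → r < a → u + v = zed a b z r) :
    deltaMap a b (kk a b z r u v) = z := by
  funext j
  obtain ⟨jv, hj1, hj2⟩ := j
  show (kk a b z r u v).1 ⟨jv, hj1.le, hj2⟩ + (kk a b z r u v).2 ⟨jv, hj1, hj2.le⟩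
      = z ⟨jv, hj1, hj2⟩
  rcases lt_trichotomy jv r with h | h | h
  · rw [kk_w1 a b z r u v _ h, kk_y_lt a b z r u v _ h, zero_add, zed, dif_pos ⟨hj1, hj2⟩]
  · subst h
    rw [kk_x_at a b z jv u v ⟨hj1.le, hj2⟩, kk_y_at a b z jv u v ⟨hj1, hj2.le⟩,
      huv hj1 hj2, zed, dif_pos ⟨hj1, hj2⟩]
  · rw [kk_x_gt a b z r u v _ h, kk_w2 a b z r u v _ h, add_zero, zed, dif_pos ⟨hj1, hj2⟩]

lemma kk_succ (a b : ℤ) (z : Jspace a b) (r : ℤ) :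
    kk a b z (r + 1) (zed a b z (r + 1)) 0 = kk a b z r 0 (zed a b z r) := by
  unfold kk
  refine Prod.ext ?_ ?_
  · funext j
    simp only
    by_cases h2 : (j : ℤ) = r + 1
    · simp [h2]
    · by_cases h1 : r + 1 < (j : ℤ)
      · simp [h1, h2, show r < (j : ℤ) by omega]
      · simp [h1, h2, show ¬ r < (j : ℤ) by omega]
  · funext j
    simp only
    by_cases h4 : (j : ℤ) = r
    · simp [h4]
    · by_cases h5 : (j : ℤ) < r
      · simp [h5, show (j : ℤ) < r + 1 by omega]
      · simp [h4, h5, show ¬ (j : ℤ) < r + 1 by omega]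


lemma kk_x_cont {γ : Type} [TopologicalSpace γ] (a b : ℤ) (z : Jspace a b) (r : ℤ)
    (uf vf : γ → ℝ≥0∞) (huf : Continuous uf) (j : {j : ℤ // b ≤ j ∧ j < a}) :
    Continuous fun c => (kk a b z r (uf c) (vf c)).1 j := by
  simp only [kk]
  by_cases h1 : r < (j : ℤ)
  · simp only [if_pos h1]; exact continuous_const
  · simp only [if_neg h1]
    by_cases h2 : (j : ℤ) = r
    · simp only [if_pos h2]; exact huf
    · simp only [if_neg h2]; exact continuous_const

lemma kk_y_cont {γ : Type} [TopologicalSpace γ] (a b : ℤ) (z : Jspace a b) (r : ℤ)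
    (uf vf : γ → ℝ≥0∞) (hvf : Continuous vf) (j : {j : ℤ // b < j ∧ j ≤ a}) :
    Continuous fun c => (kk a b z r (uf c) (vf c)).2 j := by
  simp only [kk]
  by_cases h1 : (j : ℤ) < r
  · simp only [if_pos h1]; exact continuous_const
  · simp only [if_neg h1]
    by_cases h2 : (j : ℤ) = r
    · simp only [if_pos h2]; exact hvf
    · simp only [if_neg h2]; exact continuous_const

lemma cover_bottom (a b : ℤ) (hab : b < a) (z : Jspace a b) (σ : EReal → ℝ)
    (hσc : Continuous σ) (htop : σ ⊤ = 1)
    (j0 : {j : ℤ // b < j ∧ j < a}) (hj0 : z j0 = ⊤) (t : ℝ)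
    (ht : t ∈ Set.uIcc ((b : ℝ)) (sMap a b σ (kk a b z b 0 (zed a b z b)))) :
    ∃ k, k ∈ KSet a b ∧ k ∈ KBoundary a b ∧ deltaMap a b k = z ∧ sMap a b σ k = t := by
  have hz0 : zed a b z (j0 : ℤ) = ⊤ := by rw [zed_spec a b z j0]; exact hj0
  have hfc : Continuous fun c : ℝ≥0∞ => sMap a b σ (kk a b z b c 0) :=
    sMap_continuous a b σ hσc _ b
      (fun j => kk_x_cont a b z b id (fun _ => 0) continuous_id j)
      (fun j => kk_y_cont a b z b id (fun _ => 0) continuous_const j)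
      (fun c j hj => absurd j.2.1 (not_le.2 hj))
      (fun c j hj => kk_w2 a b z b c 0 j hj)
  have hfT : sMap a b σ (kk a b z b (⊤ : ℝ≥0∞) 0) = b :=
    sMap_left a b hab σ htop _ (kk_x_at a b z b ⊤ 0 ⟨le_refl b, hab⟩)
      (fun j => kk_w2 a b z b ⊤ 0 j j.2.1)
  have hf0 : sMap a b σ (kk a b z b (0 : ℝ≥0∞) 0)
      = sMap a b σ (kk a b z b 0 (zed a b z b)) := by
    rw [zed_out a b z b (by omega)]
  obtain ⟨c, -, hc⟩ := intermediate_value_uIcc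
    (f := fun c : ℝ≥0∞ => sMap a b σ (kk a b z b c 0)) (a := ⊤) (b := 0)
    hfc.continuousOn (by simpa only [hfT, hf0] using ht)
  refine ⟨kk a b z b c 0, kk_mem_KSet a b z b c 0 le_rfl hab.le,
    Or.inl ⟨⟨j0.1, j0.2.1.le, j0.2.2⟩, ?_⟩,
    delta_kk a b z b c 0 (fun h _ => absurd h (lt_irrefl b)), hc⟩
  rw [kk_x_gt a b z b c 0 _ j0.2.1]
  exact hz0

lemma cover_top (a b : ℤ) (hab : b < a) (z : Jspace a b) (σ : EReal → ℝ)
    (hσc : Continuous σ) (hbot : σ ⊥ = 0)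
    (j0 : {j : ℤ // b < j ∧ j < a}) (hj0 : z j0 = ⊤) (t : ℝ)
    (ht : t ∈ Set.uIcc (sMap a b σ (kk a b z a 0 (zed a b z a))) ((a : ℝ))) :
    ∃ k, k ∈ KSet a b ∧ k ∈ KBoundary a b ∧ deltaMap a b k = z ∧ sMap a b σ k = t := by
  have hz0 : zed a b z (j0 : ℤ) = ⊤ := by rw [zed_spec a b z j0]; exact hj0
  have hfc : Continuous fun c : ℝ≥0∞ => sMap a b σ (kk a b z a 0 c) :=
    sMap_continuous a b σ hσc _ a
      (fun j => kk_x_cont a b z a (fun _ => 0) id continuous_const j)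
      (fun j => kk_y_cont a b z a (fun _ => 0) id continuous_id j)
      (fun c j hj => kk_w1 a b z a 0 c j hj)
      (fun c j hj => absurd j.2.2 (not_le.2 hj))
  have hfT : sMap a b σ (kk a b z a 0 (⊤ : ℝ≥0∞)) = a :=
    sMap_right a b hab σ hbot _ (kk_y_at a b z a 0 ⊤ ⟨hab, le_refl a⟩)
      (fun j => kk_w1 a b z a 0 ⊤ j j.2.2)
  have hf0 : sMap a b σ (kk a b z a 0 (0 : ℝ≥0∞))
      = sMap a b σ (kk a b z a 0 (zed a b z a)) := by
    rw [zed_out a b z a (by omega)]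
  obtain ⟨c, -, hc⟩ := intermediate_value_uIcc
    (f := fun c : ℝ≥0∞ => sMap a b σ (kk a b z a 0 c)) (a := 0) (b := ⊤)
    hfc.continuousOn (by simpa only [hfT, hf0] using ht)
  refine ⟨kk a b z a 0 c, kk_mem_KSet a b z a 0 c hab.le le_rfl,
    Or.inr ⟨⟨j0.1, j0.2.1, j0.2.2.le⟩, ?_⟩,
    delta_kk a b z a 0 c (fun _ h => absurd h (lt_irrefl a)), hc⟩
  rw [kk_y_lt a b z a 0 c _ j0.2.2]
  exact hz0

lemma cover_step (a b : ℤ) (z : Jspace a b) (σ : EReal → ℝ)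
    (hσc : Continuous σ) (htop : σ ⊤ = 1) (hbot : σ ⊥ = 0)
    (j0 : {j : ℤ // b < j ∧ j < a}) (hj0 : z j0 = ⊤) (p : ℤ) (hbp : b < p) (hpa : p ≤ a)
    (t : ℝ)
    (ht : t ∈ Set.uIcc (sMap a b σ (kk a b z p (zed a b z p) 0))
      (sMap a b σ (kk a b z p 0 (zed a b z p)))) :
    ∃ k, k ∈ KSet a b ∧ k ∈ KBoundary a b ∧ deltaMap a b k = z ∧ sMap a b σ k = t := by
  have hz0 : zed a b z (j0 : ℤ) = ⊤ := by rw [zed_spec a b z j0]; exact hj0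
  by_cases hfin : zed a b z p = ⊤
  · -- the coordinate at `p` is infinite; go through the double-infinity configuration
    have hcond : b < p ∧ p < a := by
      by_contra hc
      rw [zed_out a b z p hc] at hfin
      simp at hfin
    have hfc : Continuous fun c : ℝ≥0∞ => sMap a b σ (kk a b z p ⊤ c) :=
      sMap_continuous a b σ hσc _ p
        (fun j => kk_x_cont a b z p (fun _ => ⊤) id continuous_const j)
        (fun j => kk_y_cont a b z p (fun _ => ⊤) id continuous_id j)
        (fun c j hj => kk_w1 a b z p ⊤ c j hj)
        (fun c j hj => kk_w2 a b z p ⊤ c j hj)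
    have hgc : Continuous fun c : ℝ≥0∞ => sMap a b σ (kk a b z p c ⊤) :=
      sMap_continuous a b σ hσc _ p
        (fun j => kk_x_cont a b z p id (fun _ => ⊤) continuous_id j)
        (fun j => kk_y_cont a b z p id (fun _ => ⊤) continuous_const j)
        (fun c j hj => kk_w1 a b z p c ⊤ j hj)
        (fun c j hj => kk_w2 a b z p c ⊤ j hj)
    have hmidf : sMap a b σ (kk a b z p (⊤ : ℝ≥0∞) ⊤) = p :=
      sMap_mid a b p hcond.1 hcond.2 σ htop hbot _
        (fun j hj => kk_w1 a b z p ⊤ ⊤ j hj) (fun j hj => kk_w2 a b z p ⊤ ⊤ j hj)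
        (kk_x_at a b z p ⊤ ⊤ ⟨hcond.1.le, hcond.2⟩)
        (kk_y_at a b z p ⊤ ⊤ ⟨hcond.1, hcond.2.le⟩)
    have hf0 : sMap a b σ (kk a b z p (⊤ : ℝ≥0∞) 0)
        = sMap a b σ (kk a b z p (zed a b z p) 0) := by rw [hfin]
    have hg0 : sMap a b σ (kk a b z p (0 : ℝ≥0∞) ⊤)
        = sMap a b σ (kk a b z p 0 (zed a b z p)) := by rw [hfin]
    rcases Set.uIcc_subset_uIcc_union_uIcc
        (a := sMap a b σ (kk a b z p (zed a b z p) 0)) (b := ((p : ℤ) : ℝ))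
        (c := sMap a b σ (kk a b z p 0 (zed a b z p))) ht with h | h
    · obtain ⟨c, -, hc⟩ := intermediate_value_uIcc
        (f := fun c : ℝ≥0∞ => sMap a b σ (kk a b z p ⊤ c)) (a := 0) (b := ⊤)
        hfc.continuousOn (by simpa only [hf0, hmidf] using h)
      refine ⟨kk a b z p ⊤ c, kk_mem_KSet a b z p ⊤ c hbp.le hpa,
        Or.inl ⟨⟨p, hbp.le, hcond.2⟩, kk_x_at a b z p ⊤ c ⟨hbp.le, hcond.2⟩⟩,
        delta_kk a b z p ⊤ c (fun _ _ => by rw [hfin]; simp), hc⟩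
    · obtain ⟨c, -, hc⟩ := intermediate_value_uIcc
        (f := fun c : ℝ≥0∞ => sMap a b σ (kk a b z p c ⊤)) (a := ⊤) (b := 0)
        hgc.continuousOn (by simpa only [hg0, hmidf] using h)
      refine ⟨kk a b z p c ⊤, kk_mem_KSet a b z p c ⊤ hbp.le hpa,
        Or.inr ⟨⟨p, hbp, hpa⟩, kk_y_at a b z p c ⊤ ⟨hbp, hpa⟩⟩,
        delta_kk a b z p c ⊤ (fun _ _ => by rw [hfin]; simp), hc⟩
  · -- the coordinate at `p` is finite; use a real interpolation parameter
    set w : ℝ := (zed a b z p).toReal with hw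
    have hfc : Continuous fun c : ℝ =>
        sMap a b σ (kk a b z p (ENNReal.ofReal (w - c)) (ENNReal.ofReal c)) :=
      sMap_continuous a b σ hσc _ p
        (fun j => kk_x_cont a b z p (fun c => ENNReal.ofReal (w - c)) _
          (ENNReal.continuous_ofReal.comp (continuous_const.sub continuous_id)) j)
        (fun j => kk_y_cont a b z p _ (fun c => ENNReal.ofReal c)
          (ENNReal.continuous_ofReal) j)
        (fun c j hj => kk_w1 a b z p _ _ j hj)
        (fun c j hj => kk_w2 a b z p _ _ j hj)
    have hf0 : sMap a b σ (kk a b z p (ENNReal.ofReal (w - 0)) (ENNReal.ofReal 0))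
        = sMap a b σ (kk a b z p (zed a b z p) 0) := by
      rw [sub_zero, hw, ENNReal.ofReal_toReal hfin, ENNReal.ofReal_zero]
    have hfw : sMap a b σ (kk a b z p (ENNReal.ofReal (w - w)) (ENNReal.ofReal w))
        = sMap a b σ (kk a b z p 0 (zed a b z p)) := by
      rw [sub_self, ENNReal.ofReal_zero, hw, ENNReal.ofReal_toReal hfin]
    obtain ⟨c, hcmem, hc⟩ := intermediate_value_uIcc
      (f := fun c : ℝ => sMap a b σ (kk a b z p (ENNReal.ofReal (w - c)) (ENNReal.ofReal c)))
      (a := 0) (b := w) hfc.continuousOn (by simpa only [hf0, hfw] using ht)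
    rw [Set.uIcc_of_le (by rw [hw]; exact ENNReal.toReal_nonneg)] at hcmem
    obtain ⟨hc0, hcw⟩ := hcmem
    have hsum : ENNReal.ofReal (w - c) + ENNReal.ofReal c = zed a b z p := by
      rw [← ENNReal.ofReal_add (by linarith) hc0, sub_add_cancel, hw,
        ENNReal.ofReal_toReal hfin]
    have hj0p : (j0 : ℤ) ≠ p := fun h => hfin (h ▸ hz0)
    have hbd : kk a b z p (ENNReal.ofReal (w - c)) (ENNReal.ofReal c) ∈ KBoundary a b := by
      rcases lt_or_gt_of_ne hj0p with hlt | hgt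
      · exact Or.inr ⟨⟨j0.1, j0.2.1, j0.2.2.le⟩, by
          rw [kk_y_lt a b z p _ _ _ hlt]; exact hz0⟩
      · exact Or.inl ⟨⟨j0.1, j0.2.1.le, j0.2.2⟩, by
          rw [kk_x_gt a b z p _ _ _ hgt]; exact hz0⟩
    exact ⟨kk a b z p (ENNReal.ofReal (w - c)) (ENNReal.ofReal c),
      kk_mem_KSet a b z p _ _ hbp.le hpa, hbd,
      delta_kk a b z p _ _ (fun _ _ => hsum), hc⟩

lemma cover (a b : ℤ) (hab : b < a) (z : Jspace a b) (σ : EReal → ℝ)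
    (hσc : Continuous σ) (htop : σ ⊤ = 1) (hbot : σ ⊥ = 0)
    (j0 : {j : ℤ // b < j ∧ j < a}) (hj0 : z j0 = ⊤) (t : ℝ)
    (hbt : (b : ℝ) ≤ t) (hta : t ≤ (a : ℝ)) :
    ∃ k, k ∈ KSet a b ∧ k ∈ KBoundary a b ∧ deltaMap a b k = z ∧ sMap a b σ k = t := by
  have key : ∀ r, b ≤ r → r ≤ a → ∀ t : ℝ, (b : ℝ) ≤ t →
      t ≤ sMap a b σ (kk a b z r 0 (zed a b z r)) →
      ∃ k, k ∈ KSet a b ∧ k ∈ KBoundary a b ∧ deltaMap a b k = z ∧ sMap a b σ k = t := by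
    refine Int.le_induction ?_ ?_
    · intro _ t h1 h2
      exact cover_bottom a b hab z σ hσc htop j0 hj0 t (Set.mem_uIcc.2 (Or.inl ⟨h1, h2⟩))
    · intro r hbr ih hra t h1 h2
      rcases le_or_gt t (sMap a b σ (kk a b z r 0 (zed a b z r))) with h | h
      · exact ih (by omega) t h1 h
      · refine cover_step a b z σ hσc htop hbot j0 hj0 (r + 1) (by omega) hra t ?_
        rw [kk_succ a b z r]
        exact Set.mem_uIcc.2 (Or.inl ⟨h.le, h2⟩)
  rcases le_or_gt t (sMap a b σ (kk a b z a 0 (zed a b z a))) with h | h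
  · exact key a hab.le le_rfl t hbt h
  · exact cover_top a b hab z σ hσc hbot j0 hj0 t (Set.mem_uIcc.2 (Or.inl ⟨h.le, hta⟩))

lemma endpoint_b (a b : ℤ) (hab : b < a) (z : Jspace a b) (σ : EReal → ℝ)
    (htop : σ ⊤ = 1) :
    ∃ k, k ∈ KSet a b ∧ k ∈ KBoundary a b ∧ deltaMap a b k = z ∧ sMap a b σ k = b :=
  ⟨kk a b z b ⊤ 0, kk_mem_KSet a b z b ⊤ 0 le_rfl hab.le,
    Or.inl ⟨⟨b, le_refl b, hab⟩, kk_x_at a b z b ⊤ 0 ⟨le_refl b, hab⟩⟩,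
    delta_kk a b z b ⊤ 0 (fun h _ => absurd h (lt_irrefl b)),
    sMap_left a b hab σ htop _ (kk_x_at a b z b ⊤ 0 ⟨le_refl b, hab⟩)
      (fun j => kk_w2 a b z b ⊤ 0 j j.2.1)⟩

lemma endpoint_a (a b : ℤ) (hab : b < a) (z : Jspace a b) (σ : EReal → ℝ)
    (hbot : σ ⊥ = 0) :
    ∃ k, k ∈ KSet a b ∧ k ∈ KBoundary a b ∧ deltaMap a b k = z ∧ sMap a b σ k = a :=
  ⟨kk a b z a 0 ⊤, kk_mem_KSet a b z a 0 ⊤ hab.le le_rfl,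
    Or.inr ⟨⟨a, hab, le_refl a⟩, kk_y_at a b z a 0 ⊤ ⟨hab, le_refl a⟩⟩,
    delta_kk a b z a 0 ⊤ (fun _ h => absurd h (lt_irrefl a)),
    sMap_right a b hab σ hbot _ (kk_y_at a b z a 0 ⊤ ⟨hab, le_refl a⟩)
      (fun j => kk_w1 a b z a 0 ⊤ j j.2.2)⟩

lemma forward (a b : ℤ) (hab : b < a) (σ : EReal → ℝ)
    (h01 : ∀ x, σ x ∈ Set.Icc (0 : ℝ) 1) (htop : σ ⊤ = 1) (hbot : σ ⊥ = 0)
    (k : KAmb a b) (hKS : k ∈ KSet a b) (hKB : k ∈ KBoundary a b) :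
    (deltaMap a b k ∈ JBoundary a b ∧ sMap a b σ k ∈ Set.Icc (b : ℝ) (a : ℝ))
      ∨ (sMap a b σ k = b ∨ sMap a b σ k = a) := by
  obtain ⟨r, hbr, hra, hw1, hw2⟩ := hKS
  by_cases hJ : deltaMap a b k ∈ JBoundary a b
  · exact Or.inl ⟨hJ, sMap_bounds a b hab.le σ h01 k⟩
  · right
    rcases hKB with ⟨j, hj⟩ | ⟨j, hj⟩
    · -- an x-coordinate is infinite; it must be at `b`
      have hjb : (j : ℤ) = b := by
        by_contra hne
        have hbj : b < (j : ℤ) := lt_of_le_of_ne j.2.1 (Ne.symm hne)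
        refine hJ ⟨⟨j.1, hbj, j.2.2⟩, ?_⟩
        have hj' : k.1 ⟨j.1, hbj.le, j.2.2⟩ = ⊤ := hj
        refine top_le_iff.1 ?_
        show (⊤ : ℝ≥0∞) ≤ k.1 ⟨j.1, hbj.le, j.2.2⟩ + k.2 ⟨j.1, hbj, j.2.2.le⟩
        rw [← hj']
        exact le_self_add
      have hrb : r = b := by
        by_contra hne
        have h0 : k.1 j = 0 := hw1 j (by omega)
        rw [h0] at hj
        exact ENNReal.zero_ne_top hj
      left
      refine sMap_left a b hab σ htop k ?_ ?_
      · have hje : j = ⟨b, le_refl b, hab⟩ := Subtype.ext hjb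
        rw [← hje]; exact hj
      · intro j'
        refine hw2 j' ?_
        rw [hrb]; exact j'.2.1
    · -- a y-coordinate is infinite; it must be at `a`
      have hja : (j : ℤ) = a := by
        by_contra hne
        have hja' : (j : ℤ) < a := lt_of_le_of_ne j.2.2 hne
        refine hJ ⟨⟨j.1, j.2.1, hja'⟩, ?_⟩
        have hj' : k.2 ⟨j.1, j.2.1, hja'.le⟩ = ⊤ := hj
        refine top_le_iff.1 ?_
        show (⊤ : ℝ≥0∞) ≤ k.1 ⟨j.1, j.2.1.le, hja'⟩ + k.2 ⟨j.1, j.2.1, hja'.le⟩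
        rw [← hj']
        exact le_add_self
      have hra' : r = a := by
        by_contra hne
        have h0 : k.2 j = 0 := hw2 j (by omega)
        rw [h0] at hj
        exact ENNReal.zero_ne_top hj
      right
      refine sMap_right a b hab σ hbot k ?_ ?_
      · have hje : j = ⟨a, hab, le_refl a⟩ := Subtype.ext hja
        rw [← hje]; exact hj
      · intro j'
        refine hw1 j' ?_
        rw [hra']; exact j'.2.2

end JKFlow


open JKFlow

/-- Let `a > b` be integers and `ς : [-∞,∞] → [0,1]` an order-preserving
homeomorphism.  Then the image of `∂K(a;b)` under `δ_{ab} × s_{ab} : K(a;b) → J(a,b) × [b,a]`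
is exactly `(∂J(a,b) × [b,a]) ∪ (J(a,b) × {b,a})`. -/
theorem statement1 (a b : ℤ) (hab : b < a)
    (ς : EReal ≃ₜ Set.Icc (0 : ℝ) 1) (hς : Monotone (sigmaR ς)) :
    (fun k : KAmb a b => (deltaMap a b k, sMap a b (sigmaR ς) k)) ''
        (KSet a b ∩ KBoundary a b) =
      (JBoundary a b ×ˢ Set.Icc (b : ℝ) (a : ℝ)) ∪
        ((Set.univ : Set (Jspace a b)) ×ˢ ({(b : ℝ), (a : ℝ)} : Set ℝ)) := by
  have h01 : ∀ x, sigmaR ς x ∈ Set.Icc (0 : ℝ) 1 := fun x => (ς x).2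
  have hσc : Continuous (sigmaR ς) := continuous_subtype_val.comp ς.continuous
  have htop : sigmaR ς ⊤ = 1 := by
    obtain ⟨x, hx⟩ := ς.surjective ⟨1, by norm_num⟩
    have hx1 : sigmaR ς x = 1 := by rw [sigmaR, hx]
    exact le_antisymm (h01 ⊤).2 (hx1 ▸ hς le_top)
  have hbot : sigmaR ς ⊥ = 0 := by
    obtain ⟨x, hx⟩ := ς.surjective ⟨0, by norm_num⟩
    have hx0 : sigmaR ς x = 0 := by rw [sigmaR, hx]
    exact le_antisymm (hx0 ▸ hς bot_le) (h01 ⊥).1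
  ext ⟨z, t⟩
  constructor
  · rintro ⟨k, hk, hfk⟩
    simp only [Prod.mk.injEq] at hfk
    obtain ⟨rfl, rfl⟩ := hfk
    rcases forward a b hab _ h01 htop hbot k hk.1 hk.2 with ⟨h1, h2⟩ | h
    · exact Or.inl (Set.mem_prod.2 ⟨h1, h2⟩)
    · refine Or.inr (Set.mem_prod.2 ⟨Set.mem_univ _, ?_⟩)
      rcases h with h | h <;> simp [h]
  · intro hmem
    rcases hmem with h | h
    · obtain ⟨hzB, ht⟩ := h
      obtain ⟨j0, hj0⟩ := hzB
      obtain ⟨k, h1, h2, h3, h4⟩ :=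
        cover a b hab z _ hσc htop hbot j0 hj0 t ht.1 ht.2
      exact ⟨k, ⟨h1, h2⟩, by simp only [h3, h4]⟩
    · obtain ⟨-, ht⟩ := h
      simp only [Set.mem_insert_iff, Set.mem_singleton_iff] at ht
      rcases ht with rfl | rfl
      · obtain ⟨k, h1, h2, h3, h4⟩ := endpoint_b a b hab z _ htop
        exact ⟨k, ⟨h1, h2⟩, by simp only [h3, h4]⟩
      · obtain ⟨k, h1, h2, h3, h4⟩ := endpoint_a a b hab z _ hbot
        exact ⟨k, ⟨h1, h2⟩, by simp only [h3, h4]⟩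
end
end

section
/- Let a > a' > b be integers and let ς : [-∞,∞] → [0,1] be an order-preserving homeomorphism. Then the map δ_{ab} × s_{ab} is compatible with the left composition map κ^L: for every z ∈ J(a,a') and every (x,y) ∈ K(a';b), one has δ_{ab}(κ^L(z,(x,y))) = i_{aa'b}(z, δ_{a'b}(x,y)) and s_{ab}(κ^L(z,(x,y))) = s_{a'b}(x,y); equivalently, the square (δ_{ab} × s_{ab}) ∘ κ^L = (i_{aa'b} × incl_{[b,a']⊆[b,a]}) ∘ (id_{J(a,a')} × (δ_{a'b} × s_{a'b})) of maps J(a,a') × K(a';b) → J(a,b) × [b,a] commutes. -/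
open scoped ENNReal

noncomputable section

open JKFlow

/-- Let `a > a' > b` be integers and `ς : [-∞,∞] → [0,1]` an
order-preserving homeomorphism.  Then `δ_{ab} × s_{ab}` is compatible with the left
composition map `κ^L`: for every `z ∈ J(a,a')` and `(x,y) ∈ K(a';b)` (whose image
`κ^L(z,(x,y))` lies in `K(a;b)`), one has
`δ_{ab}(κ^L(z,(x,y))) = i_{aa'b}(z, δ_{a'b}(x,y))` and
`s_{ab}(κ^L(z,(x,y))) = s_{a'b}(x,y)`. -/
theorem statement4 (a a' b : ℤ) (haa' : a' < a) (ha'b : b < a')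
    (ς : EReal ≃ₜ Set.Icc (0 : ℝ) 1) (hς : Monotone (sigmaR ς))
    (z : Jspace a a') (k : KAmb a' b) (hk : k ∈ KSet a' b) :
    kappaL a a' b z k ∈ KSet a b ∧
      deltaMap a b (kappaL a a' b z k) = iComp a a' b z (deltaMap a' b k) ∧
      sMap a b (sigmaR ς) (kappaL a a' b z k) = sMap a' b (sigmaR ς) k := by
  obtain ⟨r, hbr, hra', hx, hy⟩ := hk
  have hσtop : sigmaR ς ⊤ = 1 := by
    obtain ⟨x, hx1⟩ := ς.toEquiv.surjective ⟨1, by norm_num⟩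
    have hx1' : ς x = ⟨1, by norm_num⟩ := hx1
    have h1 : sigmaR ς x = 1 := by simp [sigmaR, hx1']
    have h2 := hς (le_top : x ≤ ⊤)
    have hub : sigmaR ς ⊤ ≤ 1 := (ς ⊤).2.2
    rw [h1] at h2
    linarith
  refine ⟨⟨r, hbr, le_trans hra' haa'.le, ?_, ?_⟩, ?_, ?_⟩
  · intro j hj
    have h1 : ¬ a' < (j : ℤ) := by omega
    have h2 : (j : ℤ) < a' := by omega
    simp only [kappaL, dif_neg h1, dif_pos h2]
    exact hx _ hj
  · intro j hj
    simp only [kappaL]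
    by_cases h : (j : ℤ) ≤ a'
    · rw [dif_pos h]; exact hy _ hj
    · rw [dif_neg h]
  · funext j
    simp only [deltaMap, kappaL, iComp]
    rcases lt_trichotomy (j : ℤ) a' with h | h | h
    · rw [dif_neg (by omega : ¬ a' < (j:ℤ)), dif_pos h, dif_pos h.le,
        dif_neg (by omega : ¬ a' < (j:ℤ)), dif_pos h]
    · rw [dif_neg (by omega : ¬ a' < (j:ℤ)), dif_neg (by omega : ¬ (j:ℤ) < a'),
        dif_neg (by omega : ¬ a' < (j:ℤ)), dif_neg (by omega : ¬ (j:ℤ) < a')]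
      exact top_add _
    · rw [dif_pos h, dif_neg (by omega : ¬ (j:ℤ) ≤ a'), dif_pos h, add_zero]
  · -- the s-map part
    set σ := sigmaR ς
    set k' := kappaL a a' b z k with hk'
    have hsum : ∀ i ∈ Finset.Ico b a,
        σ ((↑(∑ l ∈ Finset.Icc b i, Xext a b k' l) : EReal)
            - (↑(∑ l ∈ Finset.Ioc i a, Yext a b k' l) : EReal))
        = if i < a' then
            σ ((↑(∑ l ∈ Finset.Icc b i, Xext a' b k l) : EReal)
              - (↑(∑ l ∈ Finset.Ioc i a', Yext a' b k l) : EReal))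
          else 1 := by
      intro i hi
      simp only [Finset.mem_Ico] at hi
      by_cases hia' : i < a'
      · rw [if_pos hia']
        have hX : ∑ l ∈ Finset.Icc b i, Xext a b k' l
            = ∑ l ∈ Finset.Icc b i, Xext a' b k l := by
          refine Finset.sum_congr rfl fun l hl => ?_
          simp only [Finset.mem_Icc] at hl
          have h1 : b ≤ l ∧ l < a := ⟨hl.1, by omega⟩
          have h2 : b ≤ l ∧ l < a' := ⟨hl.1, by omega⟩
          simp only [Xext, dif_pos h1, dif_pos h2, hk', kappaL,
            dif_neg (by omega : ¬ a' < l), dif_pos (by omega : l < a')]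
        have hY : ∑ l ∈ Finset.Ioc i a, Yext a b k' l
            = ∑ l ∈ Finset.Ioc i a', Yext a' b k l := by
          have hdisj : Disjoint (Finset.Ioc i a') (Finset.Ioc a' a) :=
            Finset.disjoint_left.mpr fun x hx1 hx2 => by
              simp only [Finset.mem_Ioc] at hx1 hx2; omega
          rw [← Finset.Ioc_union_Ioc_eq_Ioc (le_of_lt hia') (le_of_lt haa'),
            Finset.sum_union hdisj]
          have hz : ∑ l ∈ Finset.Ioc a' a, Yext a b k' l = 0 := by
            refine Finset.sum_eq_zero fun l hl => ?_
            simp only [Finset.mem_Ioc] at hl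
            by_cases h1 : b < l ∧ l ≤ a
            · simp only [Yext, dif_pos h1, hk', kappaL,
                dif_neg (by omega : ¬ l ≤ a')]
            · simp only [Yext, dif_neg h1]
          rw [hz, add_zero]
          refine Finset.sum_congr rfl fun l hl => ?_
          simp only [Finset.mem_Ioc] at hl
          have h1 : b < l ∧ l ≤ a := ⟨by omega, by omega⟩
          have h2 : b < l ∧ l ≤ a' := ⟨by omega, hl.2⟩
          simp only [Yext, dif_pos h1, dif_pos h2, hk', kappaL,
            dif_pos (by omega : l ≤ a')]
        rw [hX, hY]
      · rw [if_neg hia']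
        have hX : ∑ l ∈ Finset.Icc b i, Xext a b k' l = ⊤ := by
          refine ENNReal.sum_eq_top.mpr ⟨a', Finset.mem_Icc.mpr ⟨ha'b.le, by omega⟩, ?_⟩
          simp only [Xext, dif_pos (show b ≤ a' ∧ a' < a from ⟨ha'b.le, haa'⟩), hk',
            kappaL, dif_neg (lt_irrefl a'), dif_neg (lt_irrefl a')]
        have hY : ∑ l ∈ Finset.Ioc i a, Yext a b k' l = 0 := by
          refine Finset.sum_eq_zero fun l hl => ?_
          simp only [Finset.mem_Ioc] at hl
          by_cases h1 : b < l ∧ l ≤ a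
          · simp only [Yext, dif_pos h1, hk', kappaL,
              dif_neg (by omega : ¬ l ≤ a')]
          · simp only [Yext, dif_neg h1]
        rw [hX, hY]
        simp only [EReal.coe_ennreal_top, ENNReal.coe_zero, EReal.coe_ennreal_zero,
          sub_zero]
        exact hσtop
    have hsplit : ∑ i ∈ Finset.Ico b a,
        σ ((↑(∑ l ∈ Finset.Icc b i, Xext a b k' l) : EReal)
            - (↑(∑ l ∈ Finset.Ioc i a, Yext a b k' l) : EReal))
        = (∑ i ∈ Finset.Ico b a',
            σ ((↑(∑ l ∈ Finset.Icc b i, Xext a' b k l) : EReal)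
              - (↑(∑ l ∈ Finset.Ioc i a', Yext a' b k l) : EReal)))
          + ((a : ℝ) - (a' : ℝ)) := by
      have hdisj : Disjoint (Finset.Ico b a') (Finset.Ico a' a) :=
        Finset.Ico_disjoint_Ico_consecutive b a' a
      rw [Finset.sum_congr rfl hsum,
        ← Finset.Ico_union_Ico_eq_Ico (le_of_lt ha'b) (le_of_lt haa'),
        Finset.sum_union hdisj]
      congr 1
      · refine Finset.sum_congr rfl fun i hi => ?_
        rw [if_pos (Finset.mem_Ico.mp hi).2]
      · rw [Finset.sum_congr rfl (fun i hi => if_neg (by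
          simp only [Finset.mem_Ico] at hi; omega)),
          Finset.sum_const, Int.card_Ico, nsmul_eq_mul, mul_one]
        have hcast : (((a - a').toNat : ℕ) : ℝ) = (a : ℝ) - a' := by
          rw [← Int.cast_natCast, Int.toNat_of_nonneg (by omega)]
          push_cast; ring
        rw [hcast]
    simp only [sMap, hsplit]
    ring
end
end

section
/- With notation as in the context, the subset A is a deformation retract of KV_q(m_1,…,m_p): there exist a continuous retraction ρ : KV_q(m_1,…,m_p) → A with ρ|_A = id and a continuous homotopy H : KV_q(m_1,…,m_p) × [0,1] → KV_q(m_1,…,m_p) from the identity map to the composition of ρ with the inclusion A ↪ KV_q(m_1,…,m_p). In particular, the inclusion A ↪ KV_q(m_1,…,m_p) is a homotopy equivalence. -/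
open scoped ENNReal

noncomputable section

namespace KVFlow

/-- The ambient product `(∏_{i=1}^p ∏_{m_i−w ≤ j < m_i} [0,∞]) × (∏_{q ≤ j ≤ w+q} [0,∞])`
with the product topology. -/
abbrev KVAmb (p : ℕ) (m : Fin p → ℤ) (q w : ℤ) : Type :=
  ((i : Fin p) → {j : ℤ // m i - w ≤ j ∧ j < m i} → ℝ≥0∞) ×
    ({j : ℤ // q ≤ j ∧ j ≤ w + q} → ℝ≥0∞)

/-- `KV_q(m_1,…,m_p)`: the tuples `(x^1,…,x^p,y)` for which there exist integers
`r_0, r_1, …, r_p` with `q ≤ r_0 ≤ w+q`, `m_i − w ≤ r_i ≤ m_i` and `r_1 + ⋯ + r_p ≥ r_0`,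
such that `x^i_j = 0` for `j < r_i`, `y_j = 0` for `j > r_0`, and `y_j = ∞` for at least
one `j`. -/
def KVSet (p : ℕ) (m : Fin p → ℤ) (q w : ℤ) : Set (KVAmb p m q w) :=
  {k | ∃ (r0 : ℤ) (r : Fin p → ℤ),
    q ≤ r0 ∧ r0 ≤ w + q ∧ (∀ i, m i - w ≤ r i ∧ r i ≤ m i) ∧ r0 ≤ ∑ i, r i ∧
    (∀ (i : Fin p) (j : {j : ℤ // m i - w ≤ j ∧ j < m i}), (j : ℤ) < r i → k.1 i j = 0) ∧
    (∀ j : {j : ℤ // q ≤ j ∧ j ≤ w + q}, r0 < (j : ℤ) → k.2 j = 0) ∧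
    (∃ j, k.2 j = ∞)}

/-- The subset `A ⊆ KV_q(m_1,…,m_p)`: the tuples `(x^1,…,x^p,y)` with `y_q = ∞`,
`y_j = 0` for all `j ≠ q`, and such that there exist integers `q_1, …, q_p` with
`q_1 + ⋯ + q_p = q`, `m_i − w ≤ q_i ≤ m_i`, and `x^i_j = 0` for all `j < q_i`. -/
def KVA (p : ℕ) (m : Fin p → ℤ) (q w : ℤ) : Set (KVAmb p m q w) :=
  {k | (∀ j : {j : ℤ // q ≤ j ∧ j ≤ w + q},
        ((j : ℤ) = q → k.2 j = ∞) ∧ ((j : ℤ) ≠ q → k.2 j = 0)) ∧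
    ∃ qs : Fin p → ℤ, (∑ i, qs i) = q ∧ (∀ i, m i - w ≤ qs i ∧ qs i ≤ m i) ∧
      (∀ (i : Fin p) (j : {j : ℤ // m i - w ≤ j ∧ j < m i}), (j : ℤ) < qs i → k.1 i j = 0)}

/-- The boundary `∂KV_q(m_1,…,m_p)`: tuples with `x^i_j = ∞` for at least one pair
`(i,j)`. -/
def KVBd (p : ℕ) (m : Fin p → ℤ) (q w : ℤ) : Set (KVAmb p m q w) :=
  {k | ∃ i j, k.1 i j = ∞}

end KVFlow

open KVFlow

/-!
Only the `y`-coordinates move: first `y_q` is raised to `∞`, then every other `y_j` is pushed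
down to `0`. Some `y_j` equals `∞` at every time, and `y_j = 0` for `j > r_0` persists because
`q ≤ r_0`, so the path stays in `KV_q`. Its endpoint `(x, δ_q ∞)` lies in `A`: the `q_i` can be
chosen between `m_i − w` and `r_i` with sum `q`, since
`∑ (m_i − w) = q − (p − 1) w ≤ q ≤ r_0 ≤ ∑ r_i`.
-/

open scoped unitInterval
open Set

theorem Finset.exists_sum_eq_of_sum_le_of_le_sum {ι : Type*} (s : Finset ι) {a b : ι → ℤ}
    {n : ℤ} (hab : ∀ i ∈ s, a i ≤ b i) (ha : ∑ i ∈ s, a i ≤ n) (hb : n ≤ ∑ i ∈ s, b i) :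
    ∃ c : ι → ℤ, (∀ i ∈ s, a i ≤ c i ∧ c i ≤ b i) ∧ ∑ i ∈ s, c i = n := by
  classical
  induction s using Finset.cons_induction generalizing n with
  | empty => exact ⟨a, by simp, by simp_all; omega⟩
  | cons i s hi ih =>
    simp only [Finset.sum_cons, Finset.forall_mem_cons] at hab ha hb
    have hs : ∑ j ∈ s, a j ≤ ∑ j ∈ s, b j := Finset.sum_le_sum hab.2
    set ci := min (b i) (n - ∑ j ∈ s, a j)
    obtain ⟨c, hc, hcs⟩ := ih hab.2 (n := n - ci) (by omega) (by omega)
    refine ⟨Function.update c i ci, ?_, ?_⟩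
    · simp only [Finset.forall_mem_cons, Function.update_self]
      refine ⟨by omega, fun j hj => ?_⟩
      rw [Function.update_of_ne (ne_of_mem_of_not_mem hj hi)]
      exact hc j hj
    · rw [Finset.sum_cons, Function.update_self, Finset.sum_update_of_notMem hi, hcs]
      ring

def rampUp (t : I) : ℝ≥0∞ :=
  ENNReal.orderIsoUnitIntervalBirational.symm (projIcc 0 1 zero_le_one (2 * t))

def rampDown (t : I) : ℝ≥0∞ := rampUp (σ t)

lemma continuous_rampUp : Continuous rampUp :=
  ENNReal.orderIsoUnitIntervalBirational.symm.toHomeomorph.continuous.comp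
    (continuous_projIcc.comp (continuous_const.mul continuous_subtype_val))

lemma continuous_rampDown : Continuous rampDown :=
  continuous_rampUp.comp unitInterval.continuous_symm

lemma rampUp_zero : rampUp 0 = 0 := by
  rw [rampUp, Icc.coe_zero, mul_zero, projIcc_left]
  exact ENNReal.orderIsoUnitIntervalBirational.symm.map_bot

lemma rampDown_one : rampDown 1 = 0 := by
  rw [rampDown, unitInterval.symm_one, rampUp_zero]

lemma rampUp_eq_top {t : I} (ht : 1 ≤ 2 * (t : ℝ)) : rampUp t = ⊤ := by
  rw [rampUp, projIcc_of_right_le _ ht]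
  exact ENNReal.orderIsoUnitIntervalBirational.symm.map_top

lemma rampDown_eq_top {t : I} (ht : 2 * (t : ℝ) ≤ 1) : rampDown t = ⊤ :=
  rampUp_eq_top (by rw [unitInterval.coe_symm_eq]; linarith)

section Concentrate

variable {J : Type*} [DecidableEq J]

def concentrate (j₀ : J) (t : I) (y : J → ℝ≥0∞) : J → ℝ≥0∞ :=
  fun j => if j = j₀ then max (y j) (rampUp t) else min (y j) (rampDown t)

variable (j₀ : J)

lemma continuous_concentrate :
    Continuous fun ty : I × (J → ℝ≥0∞) => concentrate j₀ ty.1 ty.2 := by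
  refine continuous_pi fun j => ?_
  simp only [concentrate]
  split_ifs
  · exact ((continuous_apply j).comp continuous_snd).max (continuous_rampUp.comp continuous_fst)
  · exact ((continuous_apply j).comp continuous_snd).min (continuous_rampDown.comp continuous_fst)

lemma concentrate_zero (y : J → ℝ≥0∞) : concentrate j₀ 0 y = y := by
  ext j
  simp [concentrate, rampUp_zero, rampDown_eq_top]

lemma concentrate_one (y : J → ℝ≥0∞) : concentrate j₀ 1 y = Pi.single j₀ ⊤ := by
  ext j
  simp [concentrate, Pi.single_apply, rampUp_eq_top, rampDown_one]

lemma concentrate_apply_of_ne {y : J → ℝ≥0∞} {j : J} (hj : j ≠ j₀) (hy : y j = 0) (t : I) :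
    concentrate j₀ t y j = 0 := by
  simp [concentrate, hj, hy]

lemma exists_concentrate_eq_top {y : J → ℝ≥0∞} (hy : ∃ j, y j = ⊤) (t : I) :
    ∃ j, concentrate j₀ t y j = ⊤ := by
  obtain ⟨j, hj⟩ := hy
  rcases le_total (2 * (t : ℝ)) 1 with ht | ht
  · exact ⟨j, by unfold concentrate; split_ifs <;> simp [hj, rampDown_eq_top ht]⟩
  · exact ⟨j₀, by simp [concentrate, rampUp_eq_top ht]⟩

end Concentrate

def homotopyEquivOfDeformationRetract {Z : Type*} [TopologicalSpace Z] {K A : Set Z}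
    (r : C(K, K)) (hr : ∀ x, (r x : Z) ∈ A) (hrA : ∀ x : K, (x : Z) ∈ A → r x = x)
    (H : (ContinuousMap.id K).Homotopy r) :
    ContinuousMap.HomotopyEquiv {z // z ∈ K ∩ A} K where
  toFun := ⟨fun z => ⟨z, z.2.1⟩, by fun_prop⟩
  invFun := ⟨fun x => ⟨r x, (r x).2, hr x⟩, by fun_prop⟩
  left_inv := by
    convert ContinuousMap.Homotopic.refl (ContinuousMap.id {z // z ∈ K ∩ A}) using 1
    ext z
    exact (congrArg Subtype.val (hrA ⟨z, z.2.1⟩ z.2.2) :)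
  right_inv := ⟨(H.cast rfl (ContinuousMap.ext fun _ => rfl)).symm⟩

namespace KVFlow

variable {p : ℕ} {m : Fin p → ℤ} {q w : ℤ}

def bottomIndex (hw0 : 0 ≤ w) : {j : ℤ // q ≤ j ∧ j ≤ w + q} := ⟨q, le_rfl, by omega⟩

lemma concentrate_mem_KVSet (hw0 : 0 ≤ w) {k : KVAmb p m q w} (hk : k ∈ KVSet p m q w)
    (t : I) : (k.1, concentrate (bottomIndex hw0) t k.2) ∈ KVSet p m q w := by
  obtain ⟨r0, r, hr0, hr0w, hr, hsum, hx, hy, hinf⟩ := hk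
  refine ⟨r0, r, hr0, hr0w, hr, hsum, hx, fun j hj => ?_, exists_concentrate_eq_top _ hinf t⟩
  refine concentrate_apply_of_ne _ (fun h => ?_) (hy j hj) t
  have : (j : ℤ) = q := congrArg Subtype.val h
  omega

lemma retract_mem_KVA (hp : 1 ≤ p) (hw : w = (∑ i, m i) - q) (hw0 : 0 ≤ w)
    {k : KVAmb p m q w} (hk : k ∈ KVSet p m q w) :
    (k.1, Pi.single (bottomIndex hw0) ⊤) ∈ KVA p m q w := by
  obtain ⟨r0, r, hr0, -, hr, hsum, hx, -⟩ := hk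
  refine ⟨fun j => ⟨fun h => ?_, fun h => ?_⟩, ?_⟩
  · simp [Pi.single_apply, bottomIndex, Subtype.ext_iff, h]
  · simp [bottomIndex, Subtype.ext_iff, h]
  · have hlow : ∑ i, (m i - w) ≤ q := by
      have : (1 : ℤ) ≤ p := by exact_mod_cast hp
      simp only [Finset.sum_sub_distrib, Finset.sum_const, Finset.card_univ, Fintype.card_fin,
        nsmul_eq_mul]
      nlinarith
    obtain ⟨c, hc, hcs⟩ := Finset.univ.exists_sum_eq_of_sum_le_of_le_sum
      (fun i _ => (hr i).1) hlow (hr0.trans hsum)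
    replace hc := fun i => hc i (Finset.mem_univ i)
    exact ⟨c, hcs, fun i => ⟨(hc i).1, (hc i).2.trans (hr i).2⟩,
      fun i j hj => hx i j (hj.trans_le (hc i).2)⟩

lemma retract_eq_of_mem_KVA (hw0 : 0 ≤ w) {k : KVAmb p m q w} (hk : k ∈ KVA p m q w) :
    (k.1, Pi.single (bottomIndex hw0) ⊤) = k := by
  refine Prod.ext rfl (funext fun j => ?_)
  by_cases h : (j : ℤ) = q
  · simp [Pi.single_apply, bottomIndex, Subtype.ext_iff, h, (hk.1 j).1 h]
  · simp [bottomIndex, Subtype.ext_iff, h, (hk.1 j).2 h]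

def retraction (hw0 : 0 ≤ w) : C(KVSet p m q w, KVSet p m q w) where
  toFun k := ⟨(k.1.1, Pi.single (bottomIndex hw0) ⊤), by
    simpa [concentrate_one] using concentrate_mem_KVSet hw0 k.2 1⟩

def deformation (hw0 : 0 ≤ w) :
    (ContinuousMap.id (KVSet p m q w)).Homotopy (retraction hw0) where
  toFun tk := ⟨(tk.2.1.1, concentrate (bottomIndex hw0) tk.1 tk.2.1.2),
    concentrate_mem_KVSet hw0 tk.2.2 tk.1⟩
  continuous_toFun := by
    have := continuous_concentrate (bottomIndex (q := q) hw0)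
    fun_prop
  map_zero_left k := Subtype.ext (by simp [concentrate_zero])
  map_one_left k := Subtype.ext (by simp [concentrate_one, retraction])

end KVFlow

/-- With `p ≥ 1`, `w := m_1 + ⋯ + m_p − q ≥ 0`, the subset `A` is a
deformation retract of `KV_q(m_1,…,m_p)`: there are a continuous retraction
`ρ : KV_q(m_1,…,m_p) → A` with `ρ|_A = id` and a continuous homotopy
`H : KV_q(m_1,…,m_p) × [0,1] → KV_q(m_1,…,m_p)` from the identity to the composition of
`ρ` with the inclusion `A ↪ KV_q(m_1,…,m_p)`.  In particular, the inclusion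
`A ↪ KV_q(m_1,…,m_p)` is a homotopy equivalence. -/
theorem statement9 (p : ℕ) (hp : 1 ≤ p) (m : Fin p → ℤ) (q w : ℤ)
    (hw : w = (∑ i, m i) - q) (hw0 : 0 ≤ w) :
    ∃ ρ : ↥(KVSet p m q w) → ↥(KVSet p m q w),
      Continuous ρ ∧
      (∀ k, (↑(ρ k) : KVAmb p m q w) ∈ KVA p m q w) ∧
      (∀ k : ↥(KVSet p m q w), (↑k : KVAmb p m q w) ∈ KVA p m q w → ρ k = k) ∧
      (∃ H : ↥(KVSet p m q w) × unitInterval → ↥(KVSet p m q w),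
        Continuous H ∧ (∀ k, H (k, 0) = k) ∧ (∀ k, H (k, 1) = ρ k)) ∧
      ∃ he : ContinuousMap.HomotopyEquiv
          {k : KVAmb p m q w // k ∈ KVSet p m q w ∩ KVA p m q w} ↥(KVSet p m q w),
        ∀ x, (↑(he.toFun x) : KVAmb p m q w) = (↑x : KVAmb p m q w) := by
  have hρA : ∀ k : KVSet p m q w, (retraction hw0 k : KVAmb p m q w) ∈ KVA p m q w :=
    fun k => retract_mem_KVA hp hw hw0 k.2
  have hρ_fix : ∀ k : KVSet p m q w, (k : KVAmb p m q w) ∈ KVA p m q w → retraction hw0 k = k :=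
    fun k hk => Subtype.ext (retract_eq_of_mem_KVA hw0 hk)
  let H := deformation (p := p) (m := m) (q := q) hw0
  exact ⟨retraction hw0, (retraction hw0).continuous, hρA, hρ_fix,
    ⟨fun kt => H (kt.2, kt.1), H.continuous.comp continuous_swap, H.apply_zero, H.apply_one⟩,
    homotopyEquivOfDeformationRetract _ hρA hρ_fix H, fun _ => rfl⟩

end
end

section
/- With notation as in the context, let ∂KV_q(m_1,…,m_p) ⊆ KV_q(m_1,…,m_p) denote the subset of tuples (x^1,…,x^p,y) such that x^i_j = ∞ for at least one pair (i,j). Then there is a deformation retraction of KV_q(m_1,…,m_p) onto A that preserves ∂KV_q(m_1,…,m_p) at all times of the homotopy; in particular, A ∩ ∂KV_q(m_1,…,m_p) is a deformation retract of ∂KV_q(m_1,…,m_p), and the inclusion A ∩ ∂KV_q(m_1,…,m_p) ↪ ∂KV_q(m_1,…,m_p) is a homotopy equivalence. -/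
/-!
Leave the `x`-coordinates alone and move `y` in two phases: first raise `y_q` to `∞`, then
lower every other `y_j` to `0`. The integers `r_0, …, r_p` witnessing membership in `KV_q`
stay valid along the way, since `y` only shrinks at indices `j ≠ q`, and some `y_j` is `∞` at
all times. At the end, `y` is the `y` of `A`, and the integers `q_i` needed for `A` are found
between `m_i - w` and `r_i`, which is possible because
`∑ (m_i - w) = q - (p - 1) w ≤ q ≤ r_0 ≤ ∑ r_i`. As `x` never moves, the boundary is preserved.
-/

open scoped ENNReal

noncomputable section

open KVFlow Set Finset unitInterval

theorem exists_sum_eq_of_sum_le_le {ι G : Type*} [AddCommGroup G] [LinearOrder G]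
    [IsOrderedAddMonoid G] (s : Finset ι) {L r : ι → G} (hLr : ∀ i ∈ s, L i ≤ r i) {q : G}
    (hL : ∑ i ∈ s, L i ≤ q) (hr : q ≤ ∑ i ∈ s, r i) :
    ∃ x : ι → G, ∑ i ∈ s, x i = q ∧ ∀ i ∈ s, L i ≤ x i ∧ x i ≤ r i := by
  classical
  induction s using Finset.induction_on generalizing q with
  | empty => exact ⟨0, by simp_all [le_antisymm hr hL], by simp⟩
  | insert a s ha ih =>
    rw [sum_insert ha] at hL hr
    -- the least value at `a` for which the other coordinates can still add up to `q`
    set c := max (L a) (q - ∑ i ∈ s, r i)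
    have hca : c ≤ r a := max_le (hLr a (mem_insert_self a s)) (sub_le_iff_le_add.mpr hr)
    obtain ⟨x, hxq, hx⟩ := ih (fun i hi => hLr i (mem_insert_of_mem hi)) (q := q - c)
      (le_sub_comm.mp (max_le (le_sub_iff_add_le.mpr hL)
        (sub_le_sub_left (sum_le_sum fun i hi => hLr i (mem_insert_of_mem hi)) q)))
      (sub_le_comm.mp (le_max_right _ _))
    refine ⟨Function.update x a c, ?_, ?_⟩
    · rw [sum_insert ha, Function.update_self, sum_congr rfl fun i hi =>
        Function.update_of_ne (ne_of_mem_of_not_mem hi ha) c x, hxq, add_sub_cancel]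
    · intro i hi
      rcases mem_insert.mp hi with rfl | hi
      · simpa using ⟨le_max_left _ _, hca⟩
      · rw [Function.update_of_ne (ne_of_mem_of_not_mem hi ha)]; exact hx i hi

def ramp (t : ℝ) : ℝ≥0∞ :=
  ENNReal.orderIsoUnitIntervalBirational.symm (projIcc 0 1 zero_le_one t)

@[fun_prop]
theorem continuous_ramp : Continuous ramp :=
  ENNReal.orderIsoUnitIntervalBirational.symm.toHomeomorph.continuous.comp continuous_projIcc

theorem ramp_of_nonpos {t : ℝ} (ht : t ≤ 0) : ramp t = 0 := by
  rw [ramp, projIcc_of_le_left _ ht]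
  exact ENNReal.orderIsoUnitIntervalBirational.symm.map_bot

theorem ramp_of_one_le {t : ℝ} (ht : 1 ≤ t) : ramp t = ∞ := by
  rw [ramp, projIcc_of_right_le _ ht]
  exact ENNReal.orderIsoUnitIntervalBirational.symm.map_top

section CollapseTo

variable {J : Type*} [DecidableEq J] (j₀ : J)

/-- The coordinate `j₀` reaches `∞` at time `1/2`, before the other coordinates start to
decrease, so a vector with an infinite coordinate keeps one throughout. -/
def collapseTo : C((J → ℝ≥0∞) × I, J → ℝ≥0∞) where
  toFun yt j := if j = j₀ then yt.1 j + ramp (2 * yt.2) else min (yt.1 j) (ramp (2 - 2 * yt.2))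
  continuous_toFun := continuous_pi fun j => by split_ifs <;> fun_prop

variable {j₀}

theorem collapseTo_zero (y : J → ℝ≥0∞) : collapseTo j₀ (y, 0) = y := by
  funext j
  by_cases hj : j = j₀ <;> simp [collapseTo, hj, ramp_of_nonpos, ramp_of_one_le]

theorem collapseTo_one (y : J → ℝ≥0∞) : collapseTo j₀ (y, 1) = Pi.single j₀ ∞ := by
  funext j
  by_cases hj : j = j₀ <;> simp [collapseTo, hj, ramp_of_nonpos, ramp_of_one_le]

theorem collapseTo_apply_of_ne {y : J → ℝ≥0∞} {j : J} (hj : j ≠ j₀) (hy : y j = 0) (t : I) :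
    collapseTo j₀ (y, t) j = 0 := by
  simp [collapseTo, hj, hy]

theorem exists_collapseTo_eq_top {y : J → ℝ≥0∞} (hy : ∃ j, y j = ∞) (t : I) :
    ∃ j, collapseTo j₀ (y, t) j = ∞ := by
  rcases le_total (t : ℝ) (1 / 2) with ht | ht
  · obtain ⟨j, hj⟩ := hy
    by_cases h : j = j₀
    · subst h
      exact ⟨j, by simp [collapseTo, hj]⟩
    · exact ⟨j, by simp [collapseTo, h, hj, ramp_of_one_le (by linarith : (1 : ℝ) ≤ 2 - 2 * t)]⟩
  · exact ⟨j₀, by simp [collapseTo, ramp_of_one_le (by linarith : (1 : ℝ) ≤ 2 * t)]⟩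

end CollapseTo

section RetractionFlow

variable {X : Type*} [TopologicalSpace X]

structure IsRetractionFlow (H : C(X × I, X)) (S A : Set X) : Prop where
  map_zero : ∀ x, H (x, 0) = x
  mapsTo : ∀ x ∈ S, ∀ t, H (x, t) ∈ S
  map_one_mem : ∀ x ∈ S, H (x, 1) ∈ A
  map_one_eq : ∀ x ∈ A, H (x, 1) = x

namespace IsRetractionFlow

variable {H : C(X × I, X)} {S A : Set X}

theorem inter (h : IsRetractionFlow H S A) {B : Set X} (hB : ∀ x ∈ B, ∀ t, H (x, t) ∈ B) :
    IsRetractionFlow H (S ∩ B) (S ∩ A ∩ B) where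
  map_zero := h.map_zero
  mapsTo x hx t := ⟨h.mapsTo x hx.1 t, hB x hx.2 t⟩
  map_one_mem x hx := ⟨⟨h.mapsTo x hx.1 1, h.map_one_mem x hx.1⟩, hB x hx.2 1⟩
  map_one_eq x hx := h.map_one_eq x hx.1.2

def homotopy (h : IsRetractionFlow H S A) : C(S × I, S) where
  toFun kt := ⟨H (kt.1, kt.2), h.mapsTo _ kt.1.2 _⟩
  continuous_toFun := by fun_prop

def retraction (h : IsRetractionFlow H S A) : C(S, S) :=
  h.homotopy.comp ((ContinuousMap.id S).prodMk (ContinuousMap.const S 1))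

theorem homotopy_zero (h : IsRetractionFlow H S A) (k : S) : h.homotopy (k, 0) = k :=
  Subtype.ext (h.map_zero k)

theorem retraction_mem (h : IsRetractionFlow H S A) (k : S) : (h.retraction k : X) ∈ A :=
  h.map_one_mem k k.2

theorem retraction_eq_self (h : IsRetractionFlow H S A) (k : S) (hk : (k : X) ∈ A) :
    h.retraction k = k :=
  Subtype.ext (h.map_one_eq k hk)

def homotopyEquiv (h : IsRetractionFlow H S A) (hAS : A ⊆ S) :
    ContinuousMap.HomotopyEquiv A S where
  toFun := ⟨inclusion hAS, continuous_inclusion hAS⟩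
  invFun := ⟨fun k => ⟨H (k, 1), h.map_one_mem k k.2⟩, by fun_prop⟩
  left_inv := by
    convert ContinuousMap.Homotopic.refl (ContinuousMap.id A)
    exact ContinuousMap.ext fun k => Subtype.ext (h.map_one_eq k k.2)
  right_inv := ⟨.symm
    { toContinuousMap := h.homotopy.comp ContinuousMap.prodSwap
      map_zero_left := fun k => h.homotopy_zero k
      map_one_left := fun _ => rfl }⟩

end IsRetractionFlow

end RetractionFlow

section KV

variable {p : ℕ} {m : Fin p → ℤ} {q w : ℤ}

def qIndex (hw0 : 0 ≤ w) : {j : ℤ // q ≤ j ∧ j ≤ w + q} :=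
  ⟨q, le_rfl, le_add_of_nonneg_left hw0⟩

def kvFlow (hw0 : 0 ≤ w) : C(KVAmb p m q w × I, KVAmb p m q w) where
  toFun kt := (kt.1.1, collapseTo (qIndex hw0) (kt.1.2, kt.2))
  continuous_toFun := by fun_prop

theorem kvA_snd_iff_eq_single (hw0 : 0 ≤ w) (y : {j : ℤ // q ≤ j ∧ j ≤ w + q} → ℝ≥0∞) :
    (∀ j : {j : ℤ // q ≤ j ∧ j ≤ w + q}, ((j : ℤ) = q → y j = ∞) ∧ ((j : ℤ) ≠ q → y j = 0)) ↔
      y = Pi.single (qIndex hw0) ∞ := by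
  have hq : ∀ j : {j : ℤ // q ≤ j ∧ j ≤ w + q}, (j : ℤ) = q ↔ j = qIndex hw0 :=
    fun j => (Subtype.ext_iff (a2 := qIndex hw0)).symm
  simp only [ne_eq, hq]
  constructor
  · intro hy
    funext j
    by_cases hj : j = qIndex hw0
    · subst hj
      simpa using (hy _).1 rfl
    · simpa [hj] using (hy j).2 hj
  · rintro rfl j
    by_cases hj : j = qIndex hw0 <;> simp [hj]

theorem kvFlow_zero (hw0 : 0 ≤ w) (k : KVAmb p m q w) : kvFlow hw0 (k, 0) = k :=
  Prod.ext rfl (collapseTo_zero k.2)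

theorem kvFlow_mem_kvSet (hw0 : 0 ≤ w) {k : KVAmb p m q w} (hk : k ∈ KVSet p m q w) (t : I) :
    kvFlow hw0 (k, t) ∈ KVSet p m q w := by
  obtain ⟨r0, r, hqr0, hr0w, hr, hr0r, hx, hy, htop⟩ := hk
  refine ⟨r0, r, hqr0, hr0w, hr, hr0r, hx, fun j hj => ?_, exists_collapseTo_eq_top htop t⟩
  have hjq : j ≠ qIndex hw0 := fun h => (hqr0.trans_lt hj).ne' (congrArg Subtype.val h)
  exact collapseTo_apply_of_ne hjq (hy j hj) t

theorem kvFlow_one_mem_kvA (hp : 1 ≤ p) (hw : w = (∑ i, m i) - q) (hw0 : 0 ≤ w)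
    {k : KVAmb p m q w} (hk : k ∈ KVSet p m q w) : kvFlow hw0 (k, 1) ∈ KVA p m q w := by
  obtain ⟨r0, r, hqr0, -, hr, hr0r, hx, -, -⟩ := hk
  have hL : ∑ i, (m i - w) ≤ q := by
    rw [sum_sub_distrib, sum_const, card_univ, Fintype.card_fin, nsmul_eq_mul]
    nlinarith
  obtain ⟨qs, hqs, hqsr⟩ :=
    exists_sum_eq_of_sum_le_le univ (fun i _ => (hr i).1) hL (hqr0.trans hr0r)
  refine ⟨(kvA_snd_iff_eq_single hw0 _).2 (collapseTo_one _), qs, hqs,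
    fun i => ⟨(hqsr i (mem_univ i)).1, (hqsr i (mem_univ i)).2.trans (hr i).2⟩,
    fun i j hj => hx i j (hj.trans_le (hqsr i (mem_univ i)).2)⟩

theorem kvFlow_one_of_mem_kvA (hw0 : 0 ≤ w) {k : KVAmb p m q w} (hk : k ∈ KVA p m q w) :
    kvFlow hw0 (k, 1) = k :=
  Prod.ext rfl ((collapseTo_one k.2).trans ((kvA_snd_iff_eq_single hw0 k.2).1 hk.1).symm)

theorem isRetractionFlow_kvFlow (hp : 1 ≤ p) (hw : w = (∑ i, m i) - q) (hw0 : 0 ≤ w) :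
    IsRetractionFlow (kvFlow hw0) (KVSet p m q w) (KVA p m q w) where
  map_zero := kvFlow_zero hw0
  mapsTo _ hk := kvFlow_mem_kvSet hw0 hk
  map_one_mem _ hk := kvFlow_one_mem_kvA hp hw hw0 hk
  map_one_eq _ hk := kvFlow_one_of_mem_kvA hw0 hk

end KV

/-- With `p ≥ 1`, `w := m_1 + ⋯ + m_p − q ≥ 0`, there is a deformation
retraction of `KV_q(m_1,…,m_p)` onto `A` which preserves `∂KV_q(m_1,…,m_p)` at all times
of the homotopy; in particular, `A ∩ ∂KV_q(m_1,…,m_p)` is a deformation retract of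
`∂KV_q(m_1,…,m_p)`, and the inclusion `A ∩ ∂KV_q(m_1,…,m_p) ↪ ∂KV_q(m_1,…,m_p)` is a
homotopy equivalence. -/
theorem statement10 (p : ℕ) (hp : 1 ≤ p) (m : Fin p → ℤ) (q w : ℤ)
    (hw : w = (∑ i, m i) - q) (hw0 : 0 ≤ w) :
    (∃ ρ : ↥(KVSet p m q w) → ↥(KVSet p m q w),
      Continuous ρ ∧
      (∀ k, (↑(ρ k) : KVAmb p m q w) ∈ KVA p m q w) ∧
      (∀ k : ↥(KVSet p m q w), (↑k : KVAmb p m q w) ∈ KVA p m q w → ρ k = k) ∧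
      ∃ H : ↥(KVSet p m q w) × unitInterval → ↥(KVSet p m q w),
        Continuous H ∧ (∀ k, H (k, 0) = k) ∧ (∀ k, H (k, 1) = ρ k) ∧
        (∀ (k : ↥(KVSet p m q w)) (t : unitInterval),
          (↑k : KVAmb p m q w) ∈ KVBd p m q w →
            (↑(H (k, t)) : KVAmb p m q w) ∈ KVBd p m q w)) ∧
    (∃ ρb : ↥(KVSet p m q w ∩ KVBd p m q w) → ↥(KVSet p m q w ∩ KVBd p m q w),
      Continuous ρb ∧
      (∀ k, (↑(ρb k) : KVAmb p m q w) ∈ KVA p m q w) ∧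
      (∀ k : ↥(KVSet p m q w ∩ KVBd p m q w),
        (↑k : KVAmb p m q w) ∈ KVA p m q w → ρb k = k) ∧
      ∃ Hb : ↥(KVSet p m q w ∩ KVBd p m q w) × unitInterval →
          ↥(KVSet p m q w ∩ KVBd p m q w),
        Continuous Hb ∧ (∀ k, Hb (k, 0) = k) ∧ (∀ k, Hb (k, 1) = ρb k)) ∧
    ∃ he : ContinuousMap.HomotopyEquiv
        {k : KVAmb p m q w // k ∈ KVSet p m q w ∩ KVA p m q w ∩ KVBd p m q w}
        ↥(KVSet p m q w ∩ KVBd p m q w),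
      ∀ x, (↑(he.toFun x) : KVAmb p m q w) = (↑x : KVAmb p m q w) := by
  have h := isRetractionFlow_kvFlow hp hw hw0
  have hB : ∀ k ∈ KVBd p m q w, ∀ t, kvFlow hw0 (k, t) ∈ KVBd p m q w := fun _ hk _ => hk
  have hb := h.inter hB
  exact ⟨⟨h.retraction, h.retraction.continuous, h.retraction_mem, h.retraction_eq_self,
      h.homotopy, h.homotopy.continuous, h.homotopy_zero, fun _ => rfl, fun k t hk => hB k hk t⟩,
    ⟨hb.retraction, hb.retraction.continuous, fun k => (hb.retraction_mem k).1.2,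
      fun k hk => hb.retraction_eq_self k ⟨⟨k.2.1, hk⟩, k.2.2⟩,
      hb.homotopy, hb.homotopy.continuous, hb.homotopy_zero, fun _ => rfl⟩,
    hb.homotopyEquiv fun _ hk => ⟨hk.1.1, hk.2⟩, fun _ => rfl⟩
end
end
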